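/- arXiv:1704.03806 — 6 statements merged into one kernel-verified Lean document; each statement's English description precedes it below -/
import Mathlib

section
/- Let (G, h, m) be a connected weighted n-marked graph and let S ⊆ E(G). Then there exists a morphism φ_S : (G, h, m) → (G, h, m)/S of weighted n-marked graphs whose set of contracted edges is exactly S, and φ_S is universal among morphisms contracting S: for every morphism ψ : (G, h, m) → (G″, h″, m″) of weighted n-marked graphs whose set of contracted edges contains S, there exists a unique morphism χ : (G, h, m)/S → (G″, h″, m″) with χ ∘ φ_S = ψ. In particular, the weighted n-marked graphs obtained by contracting the edges of S in different orders are canonically isomorphic. -/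
/-! ## Graphs, weighted marked graphs, morphisms, tropical curves

A graph consists of a finite set `X = V ⊔ F` of vertices and flags, an idempotent
root map `r` with image the vertices (= fixed points of `r`), and an involution `ι`
fixing every vertex.  Edges are the two-element orbits of `ι` on flags, legs are the
flags fixed by `ι`.  A weighted `μ`-marked graph carries a vertex weighting `w`
(only its values on vertices are ever used) and a marking, i.e. a bijection
`mark : μ → legs`. -/
structure WGraph (μ : Type) : Type 1 where
  X : Type
  fin : Fintype X
  deq : DecidableEq X
  r : X → X
  ι : X → X
  r_idem : ∀ x, r (r x) = r x
  ι_invol : ∀ x, ι (ι x) = x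
  ι_fix : ∀ x, r x = x → ι x = x
  w : X → ℕ
  mark : μ → X
  mark_flag : ∀ j, r (mark j) ≠ mark j
  mark_leg : ∀ j, ι (mark j) = mark j
  mark_inj : Function.Injective mark
  mark_surj : ∀ x, r x ≠ x → ι x = x → ∃ j, mark j = x

attribute [instance] WGraph.fin WGraph.deq

namespace WGraph

variable {μ : Type} (G : WGraph μ)

/-- `x` is a vertex iff it is a fixed point of the root map. -/
def IsVertex (x : G.X) : Prop := G.r x = x

/-- `x` is a flag iff it is not a vertex. -/
def IsFlag (x : G.X) : Prop := G.r x ≠ x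

/-- A leg is a flag fixed by the involution. -/
def IsLeg (x : G.X) : Prop := G.r x ≠ x ∧ G.ι x = x

def vertexFinset : Finset G.X := Finset.univ.filter (fun x => G.r x = x)

/-- The number of vertices. -/
def numV : ℕ := G.vertexFinset.card

/-- The edges supported in a subset `A` of `X`: two-element orbits `{x, ι x}` of
flags of `A` moved by the involution. -/
def subEdgeSet (A : Finset G.X) : Finset (Finset G.X) :=
  (A.filter (fun x => G.ι x ≠ x)).image (fun x => {x, G.ι x})

/-- The set of edges of `G`, each edge being the pair `{x, ι x}` of its flags. -/
def edgeSet : Finset (Finset G.X) := G.subEdgeSet Finset.univ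

/-- The number of edges. -/
def numE : ℕ := G.edgeSet.card

/-- The valence of `v`: the number of flags emanating from `v`. -/
def val (v : G.X) : ℕ := (Finset.univ.filter (fun x => G.r x ≠ x ∧ G.r x = v)).card

/-- First Betti number `#E - #V + 1` of the subgraph supported on `A`. -/
def subB1 (A : Finset G.X) : ℤ :=
  ((G.subEdgeSet A).card : ℤ) - ((A.filter (fun x => G.r x = x)).card : ℤ) + 1

/-- Genus `b₁ + Σ_v w v` of the subgraph supported on `A`. -/
def subGenus (A : Finset G.X) : ℤ :=
  G.subB1 A + ∑ v ∈ A.filter (fun x => G.r x = x), (G.w v : ℤ)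

/-- First Betti number `#E - #V + 1` of `G`. -/
def b1 : ℤ := G.subB1 Finset.univ

/-- The genus `b₁(G) + Σ_v w v` of a (connected) weighted graph. -/
def genus : ℤ := G.subGenus Finset.univ

/-- Two vertices are adjacent via a flag `f ∈ A` when `r f = v` and `r (ι f) = u`. -/
def subAdj (A : Finset G.X) (v u : G.X) : Prop :=
  ∃ f ∈ A, G.r f ≠ f ∧ G.r f = v ∧ G.r (G.ι f) = u

/-- The subgraph supported on `A` is connected: it has a vertex, and any two of its
vertices are joined by a chain of flags of `A`. -/
def SubConnected (A : Finset G.X) : Prop :=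
  (∃ v ∈ A, G.r v = v) ∧
    ∀ v ∈ A, ∀ u ∈ A, G.r v = v → G.r u = u →
      Relation.ReflTransGen (G.subAdj A) v u

/-- Connectivity of the graph `G`. -/
def Connected : Prop := G.SubConnected Finset.univ

/-- Stability: every vertex satisfies `2 w v - 2 + val v > 0`. -/
def Stable : Prop := ∀ v, G.IsVertex v → 0 < 2 * (G.w v : ℤ) - 2 + (G.val v : ℤ)

/-- The fiber of a map over a point of the target. -/
def fiber {G' : WGraph μ} (f : G.X → G'.X) (y : G'.X) : Finset G.X :=
  Finset.univ.filter (fun x => f x = y)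

end WGraph

/-- A morphism of weighted `μ`-marked graphs: a map of underlying sets commuting
with the root maps and involutions, preserving the markings of the legs, such that
every flag of the target has exactly one preimage, and such that the preimage graph
of each vertex `y` of the target is connected of genus `w' y`. -/
structure GMor {μ : Type} (G G' : WGraph μ) : Type where
  f : G.X → G'.X
  comm_r : ∀ x, f (G.r x) = G'.r (f x)
  comm_i : ∀ x, f (G.ι x) = G'.ι (f x)
  mark_comm : ∀ j, f (G.mark j) = G'.mark j
  flag_fiber : ∀ y, G'.r y ≠ y → ∃! x, f x = y
  fiber_conn : ∀ y, G'.r y = y → G.SubConnected (G.fiber f y)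
  fiber_genus : ∀ y, G'.r y = y → G.subGenus (G.fiber f y) = (G'.w y : ℤ)

/-- The set of edges contracted by a morphism: those edges `{x, ι x}` whose flags
are sent to a vertex of the target. -/
def GMor.contractedSet {μ : Type} {G G' : WGraph μ} (φ : GMor G G') :
    Finset (Finset G.X) :=
  (Finset.univ.filter (fun x : G.X => G.ι x ≠ x ∧ G'.r (φ.f x) = φ.f x)).image
    (fun x => {x, G.ι x})

/-- An isomorphism of weighted `μ`-marked graphs: a bijection of the underlying sets
commuting with the root maps and involutions, preserving the vertex weights and the
markings of the legs. -/
structure GIso {μ : Type} (G G' : WGraph μ) : Type where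
  e : G.X ≃ G'.X
  comm_r : ∀ x, e (G.r x) = G'.r (e x)
  comm_i : ∀ x, e (G.ι x) = G'.ι (e x)
  weight : ∀ x, G.r x = x → G'.w (e x) = G.w x
  mark_comm : ∀ j, e (G.mark j) = G'.mark j

/-- A commutative monoid is sharp if `0` is its only unit. -/
def Sharp (P : Type) [AddCommMonoid P] : Prop := ∀ x y : P, x + y = 0 → x = 0

/-- A commutative monoid is integral (cancellative) iff the canonical map to its
Grothendieck group is injective. -/
def IntegralMonoid (P : Type) [AddCommMonoid P] : Prop :=
  ∀ a b c : P, a + b = a + c → b = c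

/-- An integral commutative monoid is saturated if every element `x = a - b` of its
Grothendieck group with `k • x ∈ P` for some `k ≥ 1` lies in `P`. -/
def SaturatedMonoid (P : Type) [AddCommMonoid P] : Prop :=
  ∀ (k : ℕ) (a b : P), 0 < k → (∃ p : P, k • a = k • b + p) → ∃ q : P, a = b + q

/-- A tropical curve over `P` with legs marked by `μ`: a connected weighted
`μ`-marked graph together with an edge-length function with values in `P`, nonzero
on every edge.  (The length function is recorded on flags, invariant under the
involution; only its values on the flags of edges are meaningful.) -/
structure Trop (P : Type) [AddCommMonoid P] (μ : Type) : Type 1 where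
  G : WGraph μ
  conn : G.Connected
  len : G.X → P
  len_symm : ∀ x, len (G.ι x) = len x
  len_ne : ∀ x, G.ι x ≠ x → len x ≠ 0

/-- An isomorphism of tropical curves over `P`: an isomorphism of the underlying
weighted marked graphs preserving the edge lengths. -/
structure TIso {P : Type} [AddCommMonoid P] {μ : Type} (T T' : Trop P μ) : Type where
  g : GIso T.G T'.G
  len_eq : ∀ x, T.G.ι x ≠ x → T'.len (g.e x) = T.len x

namespace Contr

open Relation

variable {μ : Type} (G : WGraph μ) (S : Finset (Finset G.X))

/-- The flags of the edges of `S`. -/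
def T : Finset G.X :=
  Finset.univ.filter (fun x => G.ι x ≠ x ∧ ({x, G.ι x} : Finset G.X) ∈ S)

variable {G S}

lemma mem_T {x : G.X} : x ∈ T G S ↔ G.ι x ≠ x ∧ ({x, G.ι x} : Finset G.X) ∈ S := by
  simp [T]

lemma T_iota {x : G.X} (hx : x ∈ T G S) : G.ι x ∈ T G S := by
  rcases mem_T.1 hx with ⟨h1, h2⟩
  refine mem_T.2 ⟨?_, ?_⟩
  · rw [G.ι_invol]; exact fun h => h1 h.symm
  · rw [G.ι_invol, Finset.pair_comm]; exact h2

lemma T_flag {x : G.X} (hx : x ∈ T G S) : G.r x ≠ x :=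
  fun h => (mem_T.1 hx).1 (G.ι_fix x h)

variable (G S)

/-- Generating relation of the contraction equivalence. -/
def R (a b : G.X) : Prop := a ∈ T G S ∧ (b = G.r a ∨ b = G.ι a)

/-- The contraction equivalence. -/
def st : Setoid G.X := ⟨Relation.EqvGen (R G S), Relation.EqvGen.is_equivalence _⟩

abbrev Q := Quotient (st G S)

def mk (x : G.X) : Q G S := Quotient.mk (st G S) x

variable {G S}

lemma eqv_iff {a b : G.X} : mk G S a = mk G S b ↔ Relation.EqvGen (R G S) a b :=
  ⟨fun h => Quotient.exact h, fun h => Quotient.sound h⟩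

lemma mk_r_of_T {x : G.X} (hx : x ∈ T G S) : mk G S (G.r x) = mk G S x :=
  eqv_iff.2 (Relation.EqvGen.symm _ _ (Relation.EqvGen.rel _ _ ⟨hx, Or.inl rfl⟩))

lemma mk_iota_of_T {x : G.X} (hx : x ∈ T G S) : mk G S (G.ι x) = mk G S x :=
  eqv_iff.2 (Relation.EqvGen.symm _ _ (Relation.EqvGen.rel _ _ ⟨hx, Or.inr rfl⟩))

/-- Elements of nontrivial classes are vertices or `T`-flags. -/
lemma sandwich {a b : G.X} (h : Relation.EqvGen (R G S) a b) :
    a = b ∨ ((G.r a = a ∨ a ∈ T G S) ∧ (G.r b = b ∨ b ∈ T G S)) := by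
  induction h with
  | rel a b hab =>
    rcases hab with ⟨ha, hb⟩
    right
    refine ⟨Or.inr ha, ?_⟩
    rcases hb with rfl | rfl
    · exact Or.inl (G.r_idem a)
    · exact Or.inr (T_iota ha)
  | refl a => exact Or.inl rfl
  | symm a b _ ih => tauto
  | trans a b c _ _ ih1 ih2 =>
    rcases ih1 with rfl | ⟨h1, h2⟩
    · exact ih2
    · rcases ih2 with rfl | ⟨h3, h4⟩
      · exact Or.inr ⟨h1, h2⟩
      · exact Or.inr ⟨h1, h4⟩

/-- A flag not in `T` forms a singleton class. -/
lemma class_singleton {x y : G.X} (hf : G.r x ≠ x) (hT : x ∉ T G S)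
    (h : mk G S y = mk G S x) : y = x := by
  rcases sandwich (eqv_iff.1 h) with rfl | ⟨_, h2⟩
  · rfl
  · rcases h2 with h2 | h2
    · exact absurd h2 hf
    · exact absurd h2 hT

lemma mk_r_eqv : ∀ a b : G.X, Relation.EqvGen (R G S) a b →
    mk G S (G.r a) = mk G S (G.r b) := by
  intro a b h
  induction h with
  | rel a b hab =>
    rcases hab with ⟨ha, rfl | rfl⟩
    · rw [G.r_idem]
    · calc mk G S (G.r a) = mk G S a := mk_r_of_T ha
        _ = mk G S (G.ι a) := (mk_iota_of_T ha).symm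
        _ = mk G S (G.r (G.ι a)) := (mk_r_of_T (T_iota ha)).symm
  | refl a => rfl
  | symm a b _ ih => exact ih.symm
  | trans a b c _ _ ih1 ih2 => exact ih1.trans ih2

lemma mk_i_eqv : ∀ a b : G.X, Relation.EqvGen (R G S) a b →
    mk G S (G.ι a) = mk G S (G.ι b) := by
  intro a b h
  induction h with
  | rel a b hab =>
    rcases hab with ⟨ha, rfl | rfl⟩
    · rw [G.ι_fix _ (G.r_idem a)]
      calc mk G S (G.ι a) = mk G S a := mk_iota_of_T ha
        _ = mk G S (G.r a) := (mk_r_of_T ha).symm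
    · rw [G.ι_invol]
      exact mk_iota_of_T ha
  | refl a => rfl
  | symm a b _ ih => exact ih.symm
  | trans a b c _ _ ih1 ih2 => exact ih1.trans ih2

variable (G S)

/-- The class of `c` as a finset of `G.X`. -/
noncomputable def cls (c : Q G S) : Finset G.X :=
  @Finset.filter _ (fun x => mk G S x = c) (fun _ => Classical.dec _) Finset.univ

variable {G S}

lemma mem_cls {x : G.X} {c : Q G S} : x ∈ cls G S c ↔ mk G S x = c := by
  simp [cls]

variable (G S)

/-- The contracted graph `G/S`. -/
noncomputable def CG : WGraph μ where
  X := Q G S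
  fin := @Quotient.fintype _ _ (st G S) (fun _ _ => Classical.dec _)
  deq := Classical.decEq _
  r := Quotient.lift (fun x => mk G S (G.r x)) mk_r_eqv
  ι := Quotient.lift (fun x => mk G S (G.ι x)) mk_i_eqv
  r_idem := by
    refine Quotient.ind ?_
    intro x
    show mk G S (G.r (G.r x)) = mk G S (G.r x)
    rw [G.r_idem]
  ι_invol := by
    refine Quotient.ind ?_
    intro x
    show mk G S (G.ι (G.ι x)) = mk G S x
    rw [G.ι_invol]
  ι_fix := by
    refine Quotient.ind ?_
    intro x h
    show mk G S (G.ι x) = mk G S x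
    replace h : mk G S (G.r x) = mk G S x := h
    by_cases hv : G.r x = x
    · rw [G.ι_fix _ hv]
    · by_cases hT : x ∈ T G S
      · exact mk_iota_of_T hT
      · exact absurd (class_singleton hv hT h) hv
  w := fun c => (G.subGenus (cls G S c)).toNat
  mark := fun j => mk G S (G.mark j)
  mark_flag := by
    intro j h
    replace h : mk G S (G.r (G.mark j)) = mk G S (G.mark j) := h
    have hT : G.mark j ∉ T G S := fun hT => (mem_T.1 hT).1 (G.mark_leg j)
    exact G.mark_flag j (class_singleton (G.mark_flag j) hT h)
  mark_leg := by
    intro j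
    show mk G S (G.ι (G.mark j)) = mk G S (G.mark j)
    rw [G.mark_leg]
  mark_inj := by
    intro j k h
    have hT : G.mark k ∉ T G S := fun hT => (mem_T.1 hT).1 (G.mark_leg k)
    exact G.mark_inj (class_singleton (G.mark_flag k) hT h)
  mark_surj := by
    refine Quotient.ind ?_
    intro x hr hι
    replace hr : mk G S (G.r x) ≠ mk G S x := hr
    replace hι : mk G S (G.ι x) = mk G S x := hι
    have hv : G.r x ≠ x := fun h => hr (by rw [h])
    have hT : x ∉ T G S := fun hT => hr (mk_r_of_T hT)
    have : G.ι x = x := class_singleton hv hT hι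
    obtain ⟨j, hj⟩ := G.mark_surj x hv this
    exact ⟨j, congrArg (mk G S) hj⟩

lemma CG_r (x : G.X) : (CG G S).r (mk G S x) = mk G S (G.r x) := rfl
lemma CG_i (x : G.X) : (CG G S).ι (mk G S x) = mk G S (G.ι x) := rfl

variable {G S}

/-- A class that is a vertex of `G/S` contains only vertices and `T`-flags. -/
lemma vertex_class_mem {x : G.X} (h : mk G S (G.r x) = mk G S x) :
    G.r x = x ∨ x ∈ T G S := by
  by_cases hv : G.r x = x
  · exact Or.inl hv
  · by_cases hT : x ∈ T G S
    · exact Or.inr hT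
    · exact absurd (class_singleton hv hT h) hv

/-- A vertex class contains a vertex. -/
lemma vertex_class_vertex {x : G.X} (h : mk G S (G.r x) = mk G S x) :
    G.r x ∈ cls G S (mk G S x) ∧ G.r (G.r x) = G.r x :=
  ⟨mem_cls.2 h, G.r_idem x⟩

lemma cls_iota_closed {c : Q G S} (hc : (CG G S).r c = c) :
    ∀ x ∈ cls G S c, G.ι x ∈ cls G S c := by
  intro x hx
  rw [mem_cls] at hx ⊢
  rw [← hx] at hc ⊢
  rcases vertex_class_mem hc with hv | hT
  · rw [G.ι_fix _ hv]
  · exact mk_iota_of_T hT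

end Contr

namespace Contr

variable {μ : Type} {G : WGraph μ}

/-- `reach G A v₀ k u`: `u` is reachable from `v₀` in `k` steps inside `A`. -/
def reach (G : WGraph μ) (A : Finset G.X) (v₀ : G.X) : ℕ → G.X → Prop
  | 0, z => z = v₀
  | (k+1), z => ∃ v, reach G A v₀ k v ∧ G.subAdj A v z

lemma subB1_nonneg {A : Finset G.X} (hc : G.SubConnected A) : 0 ≤ G.subB1 A := by
  classical
  obtain ⟨⟨v₀, hv₀A, hv₀⟩, hchain⟩ := hc
  have hex : ∀ u, Relation.ReflTransGen (G.subAdj A) v₀ u → ∃ k, reach G A v₀ k u := by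
    intro u h
    induction h with
    | refl => exact ⟨0, rfl⟩
    | tail _ hstep ih =>
      obtain ⟨k, hk⟩ := ih
      exact ⟨k + 1, _, hk, hstep⟩
  set d : G.X → ℕ := fun u => if h : ∃ k, reach G A v₀ k u then Nat.find h else 0 with hdd
  have d_le : ∀ {u k}, reach G A v₀ k u → d u ≤ k := by
    intro u k hk
    have hk' : ∃ k, reach G A v₀ k u := ⟨k, hk⟩
    rw [hdd]
    simp only [dif_pos hk']
    exact Nat.find_le hk
  have d_spec : ∀ {u}, (∃ k, reach G A v₀ k u) → reach G A v₀ (d u) u := by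
    intro u h
    rw [hdd]
    simp only [dif_pos h]
    exact Nat.find_spec h
  set s : Finset G.X := (A.filter (fun x => G.r x = x)).erase v₀ with hs
  have key : ∀ u, ∃ f, u ∈ s →
      f ∈ A ∧ G.ι f ≠ f ∧ G.r (G.ι f) = u ∧ d (G.r f) < d u := by
    intro u
    by_cases hu : u ∈ s
    swap
    · exact ⟨v₀, fun h => absurd h hu⟩
    rw [hs, Finset.mem_erase, Finset.mem_filter] at hu
    obtain ⟨hne, huA, hru⟩ := hu
    have hexu : ∃ k, reach G A v₀ k u := hex u (hchain v₀ hv₀A u huA hv₀ hru)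
    have hr := d_spec hexu
    rcases hdu : d u with _ | k
    · rw [hdu] at hr
      rw [reach] at hr
      exact absurd hr hne
    · rw [hdu] at hr
      rw [reach] at hr
      obtain ⟨v, hv, f, hfA, hff, hfv, hfu⟩ := hr
      have hdv : d v ≤ k := d_le hv
      have hEdge : G.ι f ≠ f := by
        intro h
        rw [h, hfv] at hfu
        subst hfu
        have := d_le hv
        omega
      exact ⟨f, fun _ => ⟨hfA, hEdge, hfu, by rw [hfv]; omega⟩⟩
  choose ch hch using key
  have chA := fun u hu => (hch u hu).1
  have chι := fun u hu => (hch u hu).2.1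
  have chu := fun u hu => (hch u hu).2.2.1
  have chd := fun u hu => (hch u hu).2.2.2
  have hcard : s.card ≤ (G.subEdgeSet A).card := by
    apply Finset.card_le_card_of_injOn (fun u => ({ch u, G.ι (ch u)} : Finset G.X))
    · intro u hu
      unfold WGraph.subEdgeSet
      exact Finset.mem_image.2 ⟨ch u, Finset.mem_filter.2 ⟨chA u hu, chι u hu⟩, rfl⟩
    · intro u hu u' hu' h
      simp only [Finset.mem_coe] at hu hu'
      replace h : ({ch u, G.ι (ch u)} : Finset G.X) = {ch u', G.ι (ch u')} := h
      by_contra hne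
      have hmem : ch u' ∈ ({ch u, G.ι (ch u)} : Finset G.X) := by
        rw [h]; exact Finset.mem_insert_self _ _
      rcases Finset.mem_insert.1 hmem with heq | heq
      · apply hne
        have h1 := chu u' hu'
        rw [heq] at h1
        rw [← chu u hu, ← h1]
      · rw [Finset.mem_singleton] at heq
        have h1 : u' = G.r (ch u) := by
          rw [← chu u' hu', heq, G.ι_invol]
        have h2 : d u' < d u := by rw [h1]; exact chd u hu
        have h3 : d u < d u' := by
          have := chd u' hu'
          rw [heq, chu u hu] at this
          exact this
        omega
  have hv₀f : v₀ ∈ A.filter (fun x => G.r x = x) := Finset.mem_filter.2 ⟨hv₀A, hv₀⟩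
  have hpos : 0 < (A.filter (fun x => G.r x = x)).card := Finset.card_pos.2 ⟨v₀, hv₀f⟩
  have hVcard : s.card = (A.filter (fun x => G.r x = x)).card - 1 := by
    rw [hs, Finset.card_erase_of_mem hv₀f]
  unfold WGraph.subB1
  omega

lemma subGenus_nonneg {A : Finset G.X} (hc : G.SubConnected A) : 0 ≤ G.subGenus A := by
  have h1 := subB1_nonneg hc
  have h2 : 0 ≤ ∑ v ∈ A.filter (fun x => G.r x = x), (G.w v : ℤ) :=
    Finset.sum_nonneg fun v _ => Int.ofNat_nonneg _
  unfold WGraph.subGenus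
  omega

end Contr

namespace Contr

variable {μ : Type} {G : WGraph μ} {S : Finset (Finset G.X)}

lemma subAdj_symm {A : Finset G.X} (hA : ∀ x ∈ A, G.ι x ∈ A) {v u : G.X}
    (h : G.subAdj A v u) : G.subAdj A u v := by
  obtain ⟨f, hfA, hff, hfv, hfu⟩ := h
  refine ⟨G.ι f, hA f hfA, ?_, hfu, ?_⟩
  · intro h
    have h2 : G.ι (G.ι f) = G.ι f := G.ι_fix _ h
    rw [G.ι_invol] at h2
    apply hff
    rw [h2, h, ← h2]
  · rw [G.ι_invol]; exact hfv

lemma rtg_symm {A : Finset G.X} (hA : ∀ x ∈ A, G.ι x ∈ A) {v u : G.X}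
    (h : Relation.ReflTransGen (G.subAdj A) v u) :
    Relation.ReflTransGen (G.subAdj A) u v := by
  induction h with
  | refl => exact Relation.ReflTransGen.refl
  | tail _ hstep ih =>
    exact Relation.ReflTransGen.head (subAdj_symm hA hstep) ih

lemma cls_iota_closed' {a : G.X} (ha : G.r a = a ∨ a ∈ T G S) :
    ∀ x ∈ cls G S (mk G S a), G.ι x ∈ cls G S (mk G S a) := by
  apply cls_iota_closed
  show mk G S (G.r a) = mk G S a
  rcases ha with ha | ha
  · rw [ha]
  · exact mk_r_of_T ha

lemma chainQ {a b : G.X} (h : Relation.EqvGen (R G S) a b) :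
    Relation.ReflTransGen (G.subAdj (cls G S (mk G S a))) (G.r a) (G.r b) := by
  induction h with
  | rel a b hab =>
    rcases hab with ⟨ha, rfl | rfl⟩
    · rw [G.r_idem]
    · exact Relation.ReflTransGen.single
        ⟨a, mem_cls.2 rfl, T_flag ha, rfl, rfl⟩
  | refl a => exact Relation.ReflTransGen.refl
  | symm a b hab ih =>
    have hmk : mk G S a = mk G S b := eqv_iff.2 hab
    rw [← hmk]
    rcases sandwich hab with rfl | ⟨hW, _⟩
    · exact Relation.ReflTransGen.refl
    · exact rtg_symm (cls_iota_closed' hW) ih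
  | trans a b c hab _ ih1 ih2 =>
    have hmk : mk G S a = mk G S b := eqv_iff.2 hab
    rw [← hmk] at ih2
    exact ih1.trans ih2

/-- Vertex classes are connected subgraphs. -/
lemma cls_subConnected {c : Q G S} (hc : (CG G S).r c = c) :
    G.SubConnected (cls G S c) := by
  obtain ⟨x, rfl⟩ := Quotient.exists_rep c
  have hc' : mk G S (G.r x) = mk G S x := hc
  constructor
  · exact ⟨G.r x, mem_cls.2 hc', G.r_idem x⟩
  · intro v hv u hu hrv hru
    rw [mem_cls] at hv hu
    have h : Relation.EqvGen (R G S) v u := eqv_iff.1 (hv.trans hu.symm)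
    have := chainQ h
    rw [hrv, hru] at this
    rwa [show mk G S v = mk G S x from hv] at this

variable (G S)

/-- The contraction morphism `G → G/S`. -/
noncomputable def phi : GMor G (CG G S) where
  f := mk G S
  comm_r := fun _ => rfl
  comm_i := fun _ => rfl
  mark_comm := fun _ => rfl
  flag_fiber := by
    intro y hy
    obtain ⟨x, rfl⟩ := Quotient.exists_rep y
    replace hy : mk G S (G.r x) ≠ mk G S x := hy
    have hv : G.r x ≠ x := fun h => hy (by rw [h])
    have hT : x ∉ T G S := fun hT => hy (mk_r_of_T hT)
    exact ⟨x, rfl, fun z hz => class_singleton hv hT hz⟩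
  fiber_conn := by
    intro y hy
    have : G.fiber (mk G S) y = cls G S y := by
      ext z
      simp only [WGraph.fiber, cls, Finset.mem_filter, Finset.mem_univ, true_and]
      exact Iff.rfl
    rw [this]
    exact cls_subConnected hy
  fiber_genus := by
    intro y hy
    have h1 : G.fiber (mk G S) y = cls G S y := by
      ext z
      simp only [WGraph.fiber, cls, Finset.mem_filter, Finset.mem_univ, true_and]
      exact Iff.rfl
    show G.subGenus _ = ((G.subGenus (cls G S y)).toNat : ℤ)
    rw [h1, Int.toNat_of_nonneg (subGenus_nonneg (cls_subConnected hy))]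

variable {G S}

lemma phi_contractedSet (hS : S ⊆ G.edgeSet) : (phi G S).contractedSet = S := by
  classical
  ext e
  unfold GMor.contractedSet
  constructor
  · intro he
    obtain ⟨x, hx, rfl⟩ := Finset.mem_image.1 he
    simp only [Finset.mem_filter] at hx
    obtain ⟨-, hι, hr⟩ := hx
    replace hr : mk G S (G.r x) = mk G S x := hr
    rcases vertex_class_mem hr with hv | hT
    · exact absurd (G.ι_fix _ hv) hι
    · exact (mem_T.1 hT).2
  · intro he
    have heE := hS he
    unfold WGraph.edgeSet WGraph.subEdgeSet at heE
    obtain ⟨x, hx, rfl⟩ := Finset.mem_image.1 heE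
    rw [Finset.mem_filter] at hx
    have hT : x ∈ T G S := mem_T.2 ⟨hx.2, he⟩
    refine Finset.mem_image.2 ⟨x, ?_, rfl⟩
    simp only [Finset.mem_filter]
    exact ⟨Finset.mem_univ _, hx.2, mk_r_of_T hT⟩

end Contr

namespace Contr

variable {μ : Type} {G : WGraph μ} {S : Finset (Finset G.X)}

/-- Flag-count doubling: an `ι`-closed set has twice as many flags moved by `ι`
as it has edges. -/
lemma flag_doubling {H : WGraph μ} {B : Finset H.X} (hB : ∀ x ∈ B, H.ι x ∈ B) :
    (B.filter (fun x => H.ι x ≠ x)).card = 2 * (H.subEdgeSet B).card := by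
  classical
  set Bf := B.filter (fun x => H.ι x ≠ x) with hBf
  have hmaps : ∀ x ∈ Bf, ({x, H.ι x} : Finset H.X) ∈ H.subEdgeSet B := by
    intro x hx
    exact Finset.mem_image.2 ⟨x, hx, rfl⟩
  rw [Finset.card_eq_sum_card_fiberwise hmaps]
  rw [Finset.sum_congr rfl (fun e he => ?_), Finset.sum_const, smul_eq_mul, mul_comm]
  obtain ⟨x₀, hx₀, rfl⟩ := Finset.mem_image.1 he
  rw [Finset.mem_filter] at hx₀
  have hfib : Bf.filter (fun x => ({x, H.ι x} : Finset H.X) = {x₀, H.ι x₀})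
      = {x₀, H.ι x₀} := by
    ext z
    simp only [Finset.mem_filter, hBf, Finset.mem_insert, Finset.mem_singleton]
    constructor
    · rintro ⟨_, hz⟩
      have : z ∈ ({z, H.ι z} : Finset H.X) := Finset.mem_insert_self _ _
      rw [hz] at this
      simpa using this
    · rintro (rfl | rfl)
      · exact ⟨⟨hx₀.1, hx₀.2⟩, rfl⟩
      · refine ⟨⟨hB _ hx₀.1, ?_⟩, ?_⟩
        · rw [H.ι_invol]; exact fun h => hx₀.2 h.symm
        · rw [H.ι_invol, Finset.pair_comm]
  rw [hfib, Finset.card_pair]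
  exact fun h => hx₀.2 h.symm

end Contr

namespace Contr

variable {μ : Type} {G : WGraph μ} {S : Finset (Finset G.X)}

noncomputable def imk (G : WGraph μ) (S : Finset (Finset G.X)) (A : Finset G.X) :
    Finset (Q G S) :=
  @Finset.image _ _ (Classical.decEq _) (mk G S) A

lemma mem_imk {A : Finset G.X} {c : Q G S} :
    c ∈ imk G S A ↔ ∃ x ∈ A, mk G S x = c :=
  @Finset.mem_image _ _ (Classical.decEq _) _ _ _

lemma subGenus_eq (H : WGraph μ) (B : Finset H.X) :
    H.subGenus B = ((H.subEdgeSet B).card : ℤ)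
      - ((B.filter (fun x => H.r x = x)).card : ℤ) + 1
      + ∑ v ∈ B.filter (fun x => H.r x = x), (H.w v : ℤ) := rfl

lemma subGenus_imk {A : Finset G.X}
    (hι : ∀ x ∈ A, G.ι x ∈ A)
    (hsat : ∀ x ∈ A, ∀ y, mk G S y = mk G S x → y ∈ A) :
    (CG G S).subGenus (imk G S A) = G.subGenus A := by
  classical
  set A₀ := imk G S A with hA₀
  have hι₀ : ∀ c ∈ A₀, (CG G S).ι c ∈ A₀ := by
    intro c hc
    obtain ⟨x, hx, rfl⟩ := mem_imk.1 hc
    exact mem_imk.2 ⟨G.ι x, hι x hx, rfl⟩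
  have hclsA : ∀ c ∈ A₀, ∀ x ∈ cls G S c, x ∈ A := by
    intro c hc x hx
    obtain ⟨a, ha, rfl⟩ := mem_imk.1 hc
    exact hsat a ha x (mem_cls.1 hx)
  set C := A₀.filter (fun c => (CG G S).r c = c) with hC
  have hCv : ∀ c ∈ C, (CG G S).r c = c := fun c hc => (Finset.mem_filter.1 hc).2
  have hCA₀ : ∀ c ∈ C, c ∈ A₀ := fun c hc => (Finset.mem_filter.1 hc).1
  -- vertex fibers
  have hmapsV : ∀ x ∈ A.filter (fun x => G.r x = x), mk G S x ∈ C := by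
    intro x hx
    rw [Finset.mem_filter] at hx
    refine Finset.mem_filter.2 ⟨mem_imk.2 ⟨x, hx.1, rfl⟩, ?_⟩
    show mk G S (G.r x) = mk G S x
    rw [hx.2]
  have fibV : ∀ c ∈ C, (A.filter (fun x => G.r x = x)).filter (fun x => mk G S x = c)
      = (cls G S c).filter (fun x => G.r x = x) := by
    intro c hc
    ext x
    rw [Finset.mem_filter, Finset.mem_filter, Finset.mem_filter]
    constructor
    · rintro ⟨⟨_, hxr⟩, hxc⟩
      exact ⟨mem_cls.2 hxc, hxr⟩
    · rintro ⟨hxc, hxr⟩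
      exact ⟨⟨hclsA c (hCA₀ c hc) x hxc, hxr⟩, mem_cls.1 hxc⟩
  have hVA : (A.filter (fun x => G.r x = x)).card
      = ∑ c ∈ C, ((cls G S c).filter (fun x => G.r x = x)).card := by
    rw [Finset.card_eq_sum_card_fiberwise hmapsV]
    exact Finset.sum_congr rfl (fun c hc => by
      convert congrArg Finset.card (fibV c hc) using 2
      exact Finset.filter_congr (fun _ _ => Iff.rfl))
  have hWA : ∑ x ∈ A.filter (fun x => G.r x = x), (G.w x : ℤ)
      = ∑ c ∈ C, ∑ x ∈ (cls G S c).filter (fun x => G.r x = x), (G.w x : ℤ) := by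
    rw [← Finset.sum_fiberwise_of_maps_to hmapsV (fun x => (G.w x : ℤ))]
    exact Finset.sum_congr rfl (fun c hc => by
      convert congrArg (fun s => ∑ x ∈ s, (G.w x : ℤ)) (fibV c hc) using 2
      congr 1)
  -- T-flag fibers
  have hmapsT : ∀ x ∈ A.filter (fun x => x ∈ T G S), mk G S x ∈ C := by
    intro x hx
    rw [Finset.mem_filter] at hx
    exact Finset.mem_filter.2 ⟨mem_imk.2 ⟨x, hx.1, rfl⟩, mk_r_of_T hx.2⟩
  have fibT : ∀ c ∈ C, (A.filter (fun x => x ∈ T G S)).filter (fun x => mk G S x = c)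
      = (cls G S c).filter (fun x => G.ι x ≠ x) := by
    intro c hc
    ext x
    rw [Finset.mem_filter, Finset.mem_filter, Finset.mem_filter]
    constructor
    · rintro ⟨⟨_, hxT⟩, hxc⟩
      exact ⟨mem_cls.2 hxc, (mem_T.1 hxT).1⟩
    · rintro ⟨hxc, hxι⟩
      have hcv : mk G S (G.r x) = mk G S x := by
        have := hCv c hc
        rw [← mem_cls.1 hxc] at this
        exact this
      rcases vertex_class_mem hcv with hv | hT
      · exact absurd (G.ι_fix _ hv) hxι
      · exact ⟨⟨hclsA c (hCA₀ c hc) x hxc, hT⟩, mem_cls.1 hxc⟩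
  have hTA : (A.filter (fun x => x ∈ T G S)).card
      = ∑ c ∈ C, ((cls G S c).filter (fun x => G.ι x ≠ x)).card := by
    rw [Finset.card_eq_sum_card_fiberwise hmapsT]
    exact Finset.sum_congr rfl (fun c hc => by
      convert congrArg Finset.card (fibT c hc) using 2
      exact Finset.filter_congr (fun _ _ => Iff.rfl))
  have hTA2 : (A.filter (fun x => x ∈ T G S)).card
      = 2 * ∑ c ∈ C, (G.subEdgeSet (cls G S c)).card := by
    rw [hTA, Finset.mul_sum]
    exact Finset.sum_congr rfl
      (fun c hc => flag_doubling (cls_iota_closed (hCv c hc)))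
  -- splitting the flags of A
  set NA := A.filter (fun x => G.ι x ≠ x ∧ x ∉ T G S) with hNA
  have hsplit : (A.filter (fun x => G.ι x ≠ x)).card
      = (A.filter (fun x => x ∈ T G S)).card + NA.card := by
    have h1 : (A.filter (fun x => G.ι x ≠ x)).filter (fun x => x ∈ T G S)
        = A.filter (fun x => x ∈ T G S) := by
      ext x
      rw [Finset.mem_filter, Finset.mem_filter, Finset.mem_filter]
      exact ⟨fun ⟨⟨h1, _⟩, h3⟩ => ⟨h1, h3⟩,
        fun ⟨h1, h3⟩ => ⟨⟨h1, (mem_T.1 h3).1⟩, h3⟩⟩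
    have h2 : (A.filter (fun x => G.ι x ≠ x)).filter (fun x => ¬ x ∈ T G S) = NA := by
      rw [hNA, Finset.filter_filter]
    rw [← h1, ← h2]
    exact (Finset.card_filter_add_card_filter_not (fun x => x ∈ T G S)).symm
  -- flags of A₀ are the non-T flags of A
  have hflag : ∀ x ∈ NA, G.r x ≠ x ∧ x ∉ T G S ∧ G.ι x ≠ x := by
    intro x hx
    rw [hNA, Finset.mem_filter] at hx
    exact ⟨fun h => hx.2.1 (G.ι_fix _ h), hx.2.2, hx.2.1⟩
  have hF0 : A₀.filter (fun c => (CG G S).ι c ≠ c) = imk G S NA := by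
    ext c
    constructor
    · intro hcmem
      obtain ⟨hc, hcι⟩ := Finset.mem_filter.1 hcmem
      obtain ⟨x, hx, rfl⟩ := mem_imk.1 hc
      have hxι : G.ι x ≠ x := by
        intro h
        apply hcι
        show mk G S (G.ι x) = mk G S x
        rw [h]
      have hxT : x ∉ T G S := fun hT => hcι (mk_iota_of_T hT)
      refine mem_imk.2 ⟨x, ?_, rfl⟩
      rw [hNA, Finset.mem_filter]
      exact ⟨hx, hxι, hxT⟩
    · intro hcmem
      obtain ⟨x, hx, rfl⟩ := mem_imk.1 hcmem
      obtain ⟨hf, hT, hxι⟩ := hflag x hx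
      rw [hNA, Finset.mem_filter] at hx
      refine Finset.mem_filter.2 ⟨mem_imk.2 ⟨x, hx.1, rfl⟩, ?_⟩
      intro h
      replace h : mk G S (G.ι x) = mk G S x := h
      exact hxι (class_singleton hf hT h)
  have hF0card : (A₀.filter (fun c => (CG G S).ι c ≠ c)).card = NA.card := by
    rw [hF0]
    unfold imk
    refine @Finset.card_image_of_injOn _ _ NA (mk G S) (Classical.decEq _) ?_
    intro x hx y hy hxy
    obtain ⟨hf, hT, _⟩ := hflag y (Finset.mem_coe.1 hy)
    exact class_singleton hf hT hxy
  have hEA : 2 * (G.subEdgeSet A).card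
      = 2 * (∑ c ∈ C, (G.subEdgeSet (cls G S c)).card) + 2 * ((CG G S).subEdgeSet A₀).card := by
    rw [← flag_doubling hι, ← hTA2, hsplit, ← flag_doubling (H := CG G S) (B := A₀) hι₀, hF0card]
  have hEA' : (G.subEdgeSet A).card
      = (∑ c ∈ C, (G.subEdgeSet (cls G S c)).card) + ((CG G S).subEdgeSet A₀).card := by
    omega
  -- weights of the contracted graph
  have hW0 : ∑ c ∈ C, (((CG G S).w c : ℤ))
      = ∑ c ∈ C, G.subGenus (cls G S c) := by
    refine Finset.sum_congr rfl (fun c hc => ?_)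
    show (((G.subGenus (cls G S c)).toNat : ℤ)) = _
    rw [Int.toNat_of_nonneg (subGenus_nonneg (cls_subConnected (hCv c hc)))]
  -- put everything together
  rw [subGenus_eq (CG G S) A₀, subGenus_eq, ← hC, hW0]
  have expand : ∑ c ∈ C, G.subGenus (cls G S c)
      = (∑ c ∈ C, ((G.subEdgeSet (cls G S c)).card : ℤ))
        - (∑ c ∈ C, (((cls G S c).filter (fun x => G.r x = x)).card : ℤ))
        + C.card
        + ∑ c ∈ C, ∑ x ∈ (cls G S c).filter (fun x => G.r x = x), (G.w x : ℤ) := by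
    refine (Finset.sum_congr rfl (fun (c : (CG G S).X) _ => subGenus_eq G (cls G S c))).trans ?_
    rw [Finset.sum_add_distrib, Finset.sum_add_distrib, Finset.sum_sub_distrib,
      Finset.sum_const, nsmul_eq_mul, mul_one]
  rw [expand, ← hWA, hVA]
  have hEZ : ((G.subEdgeSet A).card : ℤ)
      = (∑ c ∈ C, ((G.subEdgeSet (cls G S c)).card : ℤ)) + ((CG G S).subEdgeSet A₀).card := by
    rw [hEA']
    push_cast
    ring
  have hVZ : ((∑ c ∈ C, ((cls G S c).filter (fun x => G.r x = x)).card : ℕ) : ℤ)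
      = ∑ c ∈ C, (((cls G S c).filter (fun x => G.r x = x)).card : ℤ) := by
    push_cast
    ring
  rw [hVZ, hEZ]
  ring

end Contr

namespace Contr

variable {μ : Type} {G : WGraph μ} {S : Finset (Finset G.X)} {G₂ : WGraph μ}

lemma GMor_ext {H H' : WGraph μ} {φ₁ φ₂ : GMor H H'} (h : φ₁.f = φ₂.f) : φ₁ = φ₂ := by
  cases φ₁
  cases φ₂
  cases h
  rfl

lemma mem_fiber {H H' : WGraph μ} {f : H.X → H'.X} {y : H'.X} {x : H.X} :
    x ∈ H.fiber f y ↔ f x = y := by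
  simp [WGraph.fiber]

lemma psi_vertex_of_T (ψ : GMor G G₂) (hψ : S ⊆ ψ.contractedSet) {x : G.X}
    (hx : x ∈ T G S) : G₂.r (ψ.f x) = ψ.f x := by
  have hmem : ({x, G.ι x} : Finset G.X) ∈ ψ.contractedSet := hψ (mem_T.1 hx).2
  unfold GMor.contractedSet at hmem
  obtain ⟨z, hz, hzx⟩ := Finset.mem_image.1 hmem
  rw [Finset.mem_filter] at hz
  obtain ⟨-, hzι, hzr⟩ := hz
  have hxmem : x ∈ ({z, G.ι z} : Finset G.X) := by
    rw [hzx]; exact Finset.mem_insert_self _ _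
  rcases Finset.mem_insert.1 hxmem with rfl | hxz
  · exact hzr
  · rw [Finset.mem_singleton] at hxz
    subst hxz
    rw [ψ.comm_i, G₂.ι_fix _ hzr]
    exact hzr

lemma psi_eqv (ψ : GMor G G₂) (hψ : S ⊆ ψ.contractedSet) :
    ∀ a b, Relation.EqvGen (R G S) a b → ψ.f a = ψ.f b := by
  intro a b h
  induction h with
  | rel a b hab =>
    rcases hab with ⟨ha, rfl | rfl⟩
    · rw [ψ.comm_r, psi_vertex_of_T ψ hψ ha]
    · rw [ψ.comm_i, G₂.ι_fix _ (psi_vertex_of_T ψ hψ ha)]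
  | refl a => rfl
  | symm a b _ ih => exact ih.symm
  | trans a b c _ _ ih1 ih2 => exact ih1.trans ih2

/-- Fibers of `ψ` over vertices are `ι`-closed. -/
lemma psi_fiber_iota (ψ : GMor G G₂) {y : G₂.X} (hy : G₂.r y = y) :
    ∀ x ∈ G.fiber ψ.f y, G.ι x ∈ G.fiber ψ.f y := by
  intro x hx
  rw [mem_fiber] at hx ⊢
  rw [ψ.comm_i, hx, G₂.ι_fix _ hy]

lemma psi_fiber_sat (ψ : GMor G G₂) (hψ : S ⊆ ψ.contractedSet) {y : G₂.X} :
    ∀ x ∈ G.fiber ψ.f y, ∀ z, mk G S z = mk G S x → z ∈ G.fiber ψ.f y := by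
  intro x hx z hz
  rw [mem_fiber] at hx ⊢
  rw [← hx]
  exact psi_eqv ψ hψ z x (eqv_iff.1 hz)

/-- Connectivity is preserved by the quotient. -/
lemma imk_subConnected {A : Finset G.X} (hA : G.SubConnected A)
    (hsat : ∀ x ∈ A, ∀ z, mk G S z = mk G S x → z ∈ A) :
    (CG G S).SubConnected (imk G S A) := by
  obtain ⟨⟨v₀, hv₀, hrv₀⟩, hchain⟩ := hA
  have hmap : ∀ {v u : G.X}, Relation.ReflTransGen (G.subAdj A) v u →
      Relation.ReflTransGen ((CG G S).subAdj (imk G S A)) (mk G S v) (mk G S u) := by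
    intro v u h
    induction h with
    | refl => exact Relation.ReflTransGen.refl
    | @tail w u _ hstep ih =>
      obtain ⟨g, hgA, hgf, hgv, hgu⟩ := hstep
      by_cases hgT : g ∈ T G S
      · have : mk G S w = mk G S u := by
          rw [← hgv, ← hgu]
          rw [mk_r_of_T hgT, mk_r_of_T (T_iota hgT), mk_iota_of_T hgT]
        rwa [this] at ih
      · refine ih.tail ?_
        refine ⟨mk G S g, mem_imk.2 ⟨g, hgA, rfl⟩, ?_, ?_, ?_⟩
        · intro h
          exact hgf (class_singleton hgf hgT (h : mk G S (G.r g) = mk G S g))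
        · exact congrArg (mk G S) hgv
        · exact congrArg (mk G S) hgu
  constructor
  · refine ⟨mk G S v₀, mem_imk.2 ⟨v₀, hv₀, rfl⟩, ?_⟩
    show mk G S (G.r v₀) = mk G S v₀
    rw [hrv₀]
  · intro c hc c' hc' hrc hrc'
    obtain ⟨x, hx, rfl⟩ := mem_imk.1 hc
    obtain ⟨x', hx', rfl⟩ := mem_imk.1 hc'
    replace hrc : mk G S (G.r x) = mk G S x := hrc
    replace hrc' : mk G S (G.r x') = mk G S x' := hrc'
    have h1 : G.r x ∈ A := hsat x hx _ hrc
    have h1' : G.r x' ∈ A := hsat x' hx' _ hrc'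
    have hch := hmap (hchain (G.r x) h1 (G.r x') h1' (G.r_idem x) (G.r_idem x'))
    rwa [hrc, hrc'] at hch

end Contr

namespace Contr

variable {μ : Type} {G : WGraph μ} {S : Finset (Finset G.X)} {G₂ : WGraph μ}

/-- The induced morphism `G/S → G₂`. -/
noncomputable def chi (ψ : GMor G G₂) (hψ : S ⊆ ψ.contractedSet) :
    GMor (CG G S) G₂ where
  f := Quotient.lift ψ.f (psi_eqv ψ hψ)
  comm_r := by
    refine Quotient.ind ?_
    intro x
    exact ψ.comm_r x
  comm_i := by
    refine Quotient.ind ?_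
    intro x
    exact ψ.comm_i x
  mark_comm := fun j => ψ.mark_comm j
  flag_fiber := by
    intro y hy
    obtain ⟨x, hx, huniq⟩ := ψ.flag_fiber y hy
    refine ⟨mk G S x, hx, ?_⟩
    refine Quotient.ind ?_
    intro z hz
    exact congrArg (mk G S) (huniq z hz)
  fiber_conn := by
    intro y hy
    have hfib : (CG G S).fiber (Quotient.lift ψ.f (psi_eqv ψ hψ)) y
        = imk G S (G.fiber ψ.f y) := by
      ext c
      obtain ⟨x, rfl⟩ := Quotient.exists_rep c
      constructor
      · intro hc
        have hc' := mem_fiber.1 hc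
        exact mem_imk.2 ⟨x, mem_fiber.2 (show ψ.f x = y from hc'), rfl⟩
      · intro hc
        obtain ⟨z, hz, hzc⟩ := mem_imk.1 hc
        refine mem_fiber.2 ?_
        show ψ.f x = y
        rw [← mem_fiber.1 hz]
        exact psi_eqv ψ hψ x z (eqv_iff.1 hzc.symm)
    rw [hfib]
    exact imk_subConnected (ψ.fiber_conn y hy) (psi_fiber_sat ψ hψ)
  fiber_genus := by
    intro y hy
    have hfib : (CG G S).fiber (Quotient.lift ψ.f (psi_eqv ψ hψ)) y
        = imk G S (G.fiber ψ.f y) := by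
      ext c
      obtain ⟨x, rfl⟩ := Quotient.exists_rep c
      constructor
      · intro hc
        have hc' := mem_fiber.1 hc
        exact mem_imk.2 ⟨x, mem_fiber.2 (show ψ.f x = y from hc'), rfl⟩
      · intro hc
        obtain ⟨z, hz, hzc⟩ := mem_imk.1 hc
        refine mem_fiber.2 ?_
        show ψ.f x = y
        rw [← mem_fiber.1 hz]
        exact psi_eqv ψ hψ x z (eqv_iff.1 hzc.symm)
    rw [hfib, subGenus_imk (psi_fiber_iota ψ hy) (psi_fiber_sat ψ hψ)]
    exact ψ.fiber_genus y hy

lemma chi_phi (ψ : GMor G G₂) (hψ : S ⊆ ψ.contractedSet) (x : G.X) :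
    (chi ψ hψ).f ((phi G S).f x) = ψ.f x := rfl

lemma chi_unique (ψ : GMor G G₂) (hψ : S ⊆ ψ.contractedSet)
    (χ' : GMor (CG G S) G₂) (h' : ∀ x, χ'.f ((phi G S).f x) = ψ.f x) :
    χ' = chi ψ hψ := by
  apply GMor_ext
  funext c
  obtain ⟨x, rfl⟩ := Quotient.exists_rep c
  exact h' x

end Contr

namespace Contr

variable {μ : Type} {G : WGraph μ} {S : Finset (Finset G.X)} {G₂ : WGraph μ}

lemma chi_vertex_fiber (ψ : GMor G G₂) (hψ : S ⊆ ψ.contractedSet)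
    (hc : ψ.contractedSet = S) {y : G₂.X} (hy : G₂.r y = y) :
    ∀ c : (CG G S).X, (chi ψ hψ).f c = y → (CG G S).r c = c := by
  intro c hcy
  obtain ⟨x, rfl⟩ := Quotient.exists_rep c
  replace hcy : ψ.f x = y := hcy
  show mk G S (G.r x) = mk G S x
  by_cases hv : G.r x = x
  · rw [hv]
  by_cases hT : x ∈ T G S
  · exact mk_r_of_T hT
  exfalso
  by_cases hι : G.ι x = x
  · -- a leg maps to a leg, not a vertex
    obtain ⟨j, rfl⟩ := G.mark_surj x hv hι
    rw [ψ.mark_comm j] at hcy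
    rw [← hcy] at hy
    exact G₂.mark_flag j hy
  · -- the edge of x is contracted by ψ, so it is in S and x ∈ T
    apply hT
    refine mem_T.2 ⟨hι, ?_⟩
    rw [← hc]
    unfold GMor.contractedSet
    refine Finset.mem_image.2 ⟨x, ?_, rfl⟩
    refine Finset.mem_filter.2 ⟨Finset.mem_univ _, hι, ?_⟩
    rw [hcy, hy]

lemma chi_vertex_unique (ψ : GMor G G₂) (hψ : S ⊆ ψ.contractedSet)
    (hc : ψ.contractedSet = S) {y : G₂.X} (hy : G₂.r y = y) :
    ∀ a b : (CG G S).X, (chi ψ hψ).f a = y → (chi ψ hψ).f b = y → a = b := by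
  have hcollapse : ∀ p q : (CG G S).X,
      Relation.ReflTransGen ((CG G S).subAdj ((CG G S).fiber (chi ψ hψ).f y)) p q →
      p = q := by
    intro p q h
    induction h with
    | refl => rfl
    | tail _ hstep ih =>
      obtain ⟨g, hg, hgf, _, _⟩ := hstep
      exact absurd (chi_vertex_fiber ψ hψ hc hy g (mem_fiber.1 hg)) hgf
  intro a b ha hb
  obtain ⟨-, hch⟩ := (chi ψ hψ).fiber_conn y hy
  exact hcollapse a b (hch a (mem_fiber.2 ha) b (mem_fiber.2 hb)
    (chi_vertex_fiber ψ hψ hc hy a ha) (chi_vertex_fiber ψ hψ hc hy b hb))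

lemma chi_bijective (ψ : GMor G G₂) (hψ : S ⊆ ψ.contractedSet)
    (hc : ψ.contractedSet = S) : Function.Bijective (chi ψ hψ).f := by
  constructor
  · intro a b hab
    by_cases hy : G₂.r ((chi ψ hψ).f b) = (chi ψ hψ).f b
    · exact chi_vertex_unique ψ hψ hc hy a b hab rfl
    · obtain ⟨x, -, huniq⟩ := (chi ψ hψ).flag_fiber _ hy
      rw [huniq a hab, huniq b rfl]
  · intro y
    by_cases hy : G₂.r y = y
    · obtain ⟨⟨v, hv, -⟩, -⟩ := (chi ψ hψ).fiber_conn y hy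
      exact ⟨v, mem_fiber.1 hv⟩
    · obtain ⟨x, hx, -⟩ := (chi ψ hψ).flag_fiber y hy
      exact ⟨x, hx⟩

lemma chi_weight (ψ : GMor G G₂) (hψ : S ⊆ ψ.contractedSet)
    (hc : ψ.contractedSet = S) {c : (CG G S).X} (hcv : (CG G S).r c = c) :
    G₂.w ((chi ψ hψ).f c) = (CG G S).w c := by
  classical
  set y := (chi ψ hψ).f c with hyc
  have hy : G₂.r y = y := by
    rw [hyc]
    conv_lhs => rw [← (chi ψ hψ).comm_r c]
    rw [hcv]
  have hfib : (CG G S).fiber (chi ψ hψ).f y = {c} := by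
    ext z
    rw [Finset.mem_singleton]
    constructor
    · intro hz
      exact chi_vertex_unique ψ hψ hc hy z c (mem_fiber.1 hz) rfl
    · rintro rfl
      exact mem_fiber.2 rfl
  have hgen := (chi ψ hψ).fiber_genus y hy
  rw [hfib] at hgen
  have hsing : (CG G S).subGenus {c} = ((CG G S).w c : ℤ) := by
    rw [subGenus_eq]
    have h1 : ({c} : Finset (CG G S).X).filter (fun x => (CG G S).r x = x) = {c} := by
      rw [Finset.filter_singleton, if_pos hcv]
    have h2 : (CG G S).subEdgeSet {c} = ∅ := by
      unfold WGraph.subEdgeSet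
      have : ({c} : Finset (CG G S).X).filter (fun x => (CG G S).ι x ≠ x) = ∅ := by
        rw [Finset.filter_singleton, if_neg]
        intro h
        exact h ((CG G S).ι_fix c hcv)
      rw [this, Finset.image_empty]
    rw [h1, h2, Finset.sum_singleton]
    simp
  rw [hsing] at hgen
  exact_mod_cast hgen.symm

/-- The comparison isomorphism. -/
noncomputable def giso (ψ : GMor G G₂) (hψ : S ⊆ ψ.contractedSet)
    (hc : ψ.contractedSet = S) : GIso (CG G S) G₂ where
  e := Equiv.ofBijective _ (chi_bijective ψ hψ hc)
  comm_r := fun c => (chi ψ hψ).comm_r c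
  comm_i := fun c => (chi ψ hψ).comm_i c
  weight := fun c hcv => chi_weight ψ hψ hc hcv
  mark_comm := fun j => (chi ψ hψ).mark_comm j

end Contr

/-- For a connected weighted `n`-marked graph `G` and a subset
`S ⊆ E(G)` there is a canonical contraction morphism `φ_S : G → G/S` whose set of
contracted edges is exactly `S`, and it is universal among morphisms contracting at
least `S`: every morphism `ψ : G → G''` whose contracted edge set contains `S`
factors uniquely through `φ_S`.  In particular (last conjunct) any two
realizations of the contraction of `S` are canonically isomorphic, so the result of
contracting the edges of `S` in different orders is well defined up to canonical
isomorphism. -/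
theorem contraction_exists_and_universal {n : ℕ} (G : WGraph (Fin n))
    (hconn : G.Connected) (S : Finset (Finset G.X)) (hS : S ⊆ G.edgeSet) :
    ∃ (G₀ : WGraph (Fin n)) (φ : GMor G G₀),
      φ.contractedSet = S ∧
      (∀ (G₂ : WGraph (Fin n)) (ψ : GMor G G₂), S ⊆ ψ.contractedSet →
        ∃! χ : GMor G₀ G₂, ∀ x, χ.f (φ.f x) = ψ.f x) ∧
      (∀ (G₂ : WGraph (Fin n)) (ψ : GMor G G₂), ψ.contractedSet = S →
        ∃ χ : GIso G₀ G₂, ∀ x, χ.e (φ.f x) = ψ.f x) := by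
  refine ⟨Contr.CG G S, Contr.phi G S, Contr.phi_contractedSet hS, ?_, ?_⟩
  · intro G₂ ψ hψ
    exact ⟨Contr.chi ψ hψ, fun x => rfl,
      fun χ' h' => Contr.chi_unique ψ hψ χ' h'⟩
  · intro G₂ ψ hc
    exact ⟨Contr.giso ψ hc.ge hc, fun x => rfl⟩
end

section
/- Every stable graph is a contraction of a maximal one: for every stable connected weighted n-marked graph (G, h, m) of genus g there exist a stable connected weighted n-marked graph (G′, h′, m′) of genus g with h′(v) = 0 and val(v) = 3 for every vertex v of G′, and a subset S ⊆ E(G′), such that (G′, h′, m′)/S is isomorphic to (G, h, m) as a weighted n-marked graph. -/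
open Finset

section helpers
variable {α β : Type} [Fintype α] [Fintype β]

theorem card_filter_sum_type (p : α ⊕ β → Prop) [DecidablePred p] :
    (univ.filter p).card
      = (univ.filter (fun a => p (Sum.inl a))).card + (univ.filter (fun b => p (Sum.inr b))).card := by
  classical
  rw [Finset.card_filter, Finset.card_filter, Finset.card_filter, Fintype.sum_sum_type]

theorem sum_filter_sum_type {M : Type} [AddCommMonoid M] (p : α ⊕ β → Prop)
    [DecidablePred p] (g : α ⊕ β → M) :
    ∑ x ∈ univ.filter p, g x
      = ∑ a ∈ univ.filter (fun a => p (Sum.inl a)), g (Sum.inl a)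
        + ∑ b ∈ univ.filter (fun b => p (Sum.inr b)), g (Sum.inr b) := by
  classical
  rw [Finset.sum_filter, Finset.sum_filter, Finset.sum_filter, Fintype.sum_sum_type]

end helpers

namespace WGraph
variable {μ : Type} (G : WGraph μ)

theorem flag_of_moved {x : G.X} (h : G.ι x ≠ x) : G.r x ≠ x :=
  fun hv => h (G.ι_fix x hv)

theorem ι_flag {x : G.X} (h : G.r x ≠ x) : G.r (G.ι x) ≠ G.ι x := by
  intro hv
  have h2 := G.ι_fix _ hv
  have hx : x = G.ι x := by conv_lhs => rw [← G.ι_invol x, h2]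
  rw [← hx] at hv
  exact h hv

/-- `2 * #edges(A) = #(moved flags of A)` provided `A` is closed under `ι`. -/
theorem two_mul_card_subEdgeSet {A : Finset G.X} (hA : ∀ x ∈ A, G.ι x ∈ A) :
    2 * (G.subEdgeSet A).card = (A.filter (fun x => G.ι x ≠ x)).card := by
  classical
  rw [Finset.card_eq_sum_card_fiberwise
    (f := fun x => ({x, G.ι x} : Finset G.X)) (t := G.subEdgeSet A)
    (fun x hx => Finset.mem_image_of_mem _ hx)]
  have key : ∀ e ∈ G.subEdgeSet A,
      ((A.filter (fun x => G.ι x ≠ x)).filter (fun a => ({a, G.ι a} : Finset G.X) = e)).card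
        = 2 := by
    intro e he
    obtain ⟨x, hx, rfl⟩ := Finset.mem_image.1 he
    rw [Finset.mem_filter] at hx
    have hset : ((A.filter (fun x => G.ι x ≠ x)).filter
        (fun a => ({a, G.ι a} : Finset G.X) = {x, G.ι x})) = {x, G.ι x} := by
      ext y
      simp only [Finset.mem_filter, Finset.mem_insert, Finset.mem_singleton]
      constructor
      · rintro ⟨-, hpair⟩
        have : y ∈ ({y, G.ι y} : Finset G.X) := Finset.mem_insert_self _ _
        rw [hpair] at this
        simpa using this
      · rintro (rfl | rfl)
        · exact ⟨⟨hx.1, hx.2⟩, rfl⟩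
        · refine ⟨⟨hA x hx.1, ?_⟩, ?_⟩
          · rw [G.ι_invol]; exact fun h => hx.2 h.symm
          · rw [G.ι_invol, Finset.pair_comm]
    rw [hset]
    exact Finset.card_pair (fun h => hx.2 h.symm)
  rw [Finset.sum_congr rfl key, Finset.sum_const, smul_eq_mul, mul_comm]

end WGraph
namespace WGraph

theorem mem_fiber {μ : Type} {G G' : WGraph μ} (f : G.X → G'.X) (y : G'.X) (x : G.X) :
    x ∈ G.fiber f y ↔ f x = y := by simp [WGraph.fiber]

theorem subAdj_mono {μ : Type} (G : WGraph μ) {A B : Finset G.X} (h : A ⊆ B) {x y : G.X} :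
    G.subAdj A x y → G.subAdj B x y := by
  rintro ⟨f, hf, h1, h2, h3⟩; exact ⟨f, h hf, h1, h2, h3⟩

end WGraph

namespace GMor

variable {μ : Type} {G₂ G₁ : WGraph μ} (ψ : GMor G₂ G₁)

theorem vertex_map {x : G₂.X} (h : G₂.r x = x) : G₁.r (ψ.f x) = ψ.f x := by
  rw [← ψ.comm_r, h]

theorem flag_lift_flag {x : G₂.X} (h : G₁.r (ψ.f x) ≠ ψ.f x) : G₂.r x ≠ x :=
  fun hx => h (ψ.vertex_map hx)

theorem preimage_subConnected (A : Finset G₁.X)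
    (hr : ∀ x ∈ A, G₁.r x ∈ A) (hι : ∀ x ∈ A, G₁.ι x ∈ A)
    (hc : G₁.SubConnected A) :
    G₂.SubConnected (Finset.univ.filter (fun x => ψ.f x ∈ A)) := by
  classical
  set B := Finset.univ.filter (fun x => ψ.f x ∈ A) with hB
  have hmemB : ∀ x : G₂.X, x ∈ B ↔ ψ.f x ∈ A := by
    intro x; simp [hB]
  have hfibsub : ∀ v ∈ A, (G₂.fiber ψ.f v) ⊆ B := by
    intro v hv x hx
    rw [WGraph.mem_fiber] at hx
    rw [hmemB, hx]; exact hv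
  have hfib_conn_in_B : ∀ v ∈ A, G₁.r v = v → ∀ a ∈ G₂.fiber ψ.f v, ∀ b ∈ G₂.fiber ψ.f v,
      G₂.r a = a → G₂.r b = b → Relation.ReflTransGen (G₂.subAdj B) a b := by
    intro v hv hvv a ha b hb haa hbb
    have h0 := (ψ.fiber_conn v hvv).2 a ha b hb haa hbb
    exact Relation.ReflTransGen.mono (fun x y hxy => G₂.subAdj_mono (hfibsub v hv) hxy) _ _ h0
  constructor
  · obtain ⟨v, hv, hvv⟩ := hc.1
    obtain ⟨x, hx, hxx⟩ := (ψ.fiber_conn v hvv).1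
    exact ⟨x, hfibsub v hv hx, hxx⟩
  · intro a ha b hb haa hbb
    rw [hmemB] at ha hb
    have hfa : G₁.r (ψ.f a) = ψ.f a := ψ.vertex_map haa
    have hfb : G₁.r (ψ.f b) = ψ.f b := ψ.vertex_map hbb
    have hrtg := hc.2 (ψ.f a) ha (ψ.f b) hb hfa hfb
    have main : ∀ u, Relation.ReflTransGen (G₁.subAdj A) (ψ.f a) u → u ∈ A → G₁.r u = u →
        ∀ b₂, G₂.r b₂ = b₂ → ψ.f b₂ = u → Relation.ReflTransGen (G₂.subAdj B) a b₂ := by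
      intro u hu
      induction hu with
      | refl =>
        intro huA huv b₂ hb₂ hfb₂
        exact hfib_conn_in_B _ ha hfa a ((WGraph.mem_fiber _ _ _).2 rfl) b₂
          ((WGraph.mem_fiber _ _ _).2 hfb₂) haa hb₂
      | @tail u' u hsteps hstep ih =>
        intro huA huu b₂ hb₂ hfb₂
        obtain ⟨f, hfA, hff, hfu', hfι⟩ := hstep
        have hu'A : u' ∈ A := hfu' ▸ hr f hfA
        have hu'' : G₁.r u' = u' := by rw [← hfu']; exact G₁.r_idem f
        obtain ⟨f₂, hf₂, huniq⟩ := ψ.flag_fiber f hff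
        have hf₂flag : G₂.r f₂ ≠ f₂ := ψ.flag_lift_flag (by rw [hf₂]; exact hff)
        have hrf₂ : ψ.f (G₂.r f₂) = u' := by rw [ψ.comm_r, hf₂, hfu']
        have hrιf₂ : ψ.f (G₂.r (G₂.ι f₂)) = u := by rw [ψ.comm_r, ψ.comm_i, hf₂, hfι]
        have h1 := ih hu'A hu'' (G₂.r f₂) (G₂.r_idem f₂) hrf₂
        have hf₂B : f₂ ∈ B := by rw [hmemB, hf₂]; exact hfA
        have hstep₂ : G₂.subAdj B (G₂.r f₂) (G₂.r (G₂.ι f₂)) := ⟨f₂, hf₂B, hf₂flag, rfl, rfl⟩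
        have h3 := hfib_conn_in_B u huA huu (G₂.r (G₂.ι f₂))
          ((WGraph.mem_fiber _ _ _).2 hrιf₂) b₂ ((WGraph.mem_fiber _ _ _).2 hfb₂)
          (G₂.r_idem _) hb₂
        exact (h1.tail hstep₂).trans h3
    exact main (ψ.f b) hrtg hb hfb b hbb rfl

end GMor
namespace GMor
open Finset

variable {μ : Type} {G₂ G₁ : WGraph μ} (ψ : GMor G₂ G₁)

theorem preimage_subGenus (A : Finset G₁.X)
    (hr : ∀ x ∈ A, G₁.r x ∈ A) (hι : ∀ x ∈ A, G₁.ι x ∈ A) :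
    G₂.subGenus (Finset.univ.filter (fun x => ψ.f x ∈ A)) = G₁.subGenus A := by
  classical
  set B := Finset.univ.filter (fun x => ψ.f x ∈ A) with hB
  have hmemB : ∀ x : G₂.X, x ∈ B ↔ ψ.f x ∈ A := by intro x; simp [hB]
  set VA := A.filter (fun x => G₁.r x = x) with hVA
  have hmemVA : ∀ v : G₁.X, v ∈ VA ↔ v ∈ A ∧ G₁.r v = v := by intro v; simp [hVA]
  -- fibers over vertices are ι-closed
  have hfibι : ∀ v : G₁.X, G₁.r v = v → ∀ x ∈ G₂.fiber ψ.f v, G₂.ι x ∈ G₂.fiber ψ.f v := by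
    intro v hv x hx
    rw [WGraph.mem_fiber] at hx ⊢
    rw [ψ.comm_i, hx, G₁.ι_fix v hv]
  -- B is ι-closed
  have hBι : ∀ x ∈ B, G₂.ι x ∈ B := by
    intro x hx
    rw [hmemB] at hx ⊢
    rw [ψ.comm_i]; exact hι _ hx
  -- vertex count
  have hV : (B.filter (fun x => G₂.r x = x)).card
      = ∑ v ∈ VA, ((G₂.fiber ψ.f v).filter (fun x => G₂.r x = x)).card := by
    rw [Finset.card_eq_sum_card_fiberwise (f := ψ.f) (t := VA)
      (by intro x hx
          rw [Finset.mem_coe, Finset.mem_filter, hmemB] at hx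
          rw [Finset.mem_coe, hmemVA]
          exact ⟨hx.1, ψ.vertex_map hx.2⟩)]
    refine Finset.sum_congr rfl (fun v hv => ?_)
    congr 1
    ext x
    rw [hmemVA] at hv
    simp only [Finset.mem_filter, hmemB, WGraph.mem_fiber]
    constructor
    · rintro ⟨⟨-, h2⟩, h3⟩; exact ⟨h3, h2⟩
    · rintro ⟨h1, h2⟩; exact ⟨⟨h1 ▸ hv.1, h2⟩, h1⟩
  -- weight sum
  have hW : ∑ x ∈ B.filter (fun x => G₂.r x = x), (G₂.w x : ℤ)
      = ∑ v ∈ VA, ∑ x ∈ (G₂.fiber ψ.f v).filter (fun x => G₂.r x = x), (G₂.w x : ℤ) := by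
    rw [← Finset.sum_fiberwise_of_maps_to (g := ψ.f) (t := VA)
      (by intro x hx
          rw [Finset.mem_filter, hmemB] at hx
          rw [hmemVA]
          exact ⟨hx.1, ψ.vertex_map hx.2⟩) (fun x => (G₂.w x : ℤ))]
    refine Finset.sum_congr rfl (fun v hv => ?_)
    apply Finset.sum_congr _ (fun _ _ => rfl)
    ext x
    rw [hmemVA] at hv
    simp only [Finset.mem_filter, hmemB, WGraph.mem_fiber]
    constructor
    · rintro ⟨⟨-, h2⟩, h3⟩; exact ⟨h3, h2⟩
    · rintro ⟨h1, h2⟩; exact ⟨⟨h1 ▸ hv.1, h2⟩, h1⟩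
  -- moved-flag count, part 1: those mapping to a vertex
  have hM1 : ((B.filter (fun x => G₂.ι x ≠ x)).filter
        (fun x => G₁.r (ψ.f x) = ψ.f x)).card
      = ∑ v ∈ VA, ((G₂.fiber ψ.f v).filter (fun x => G₂.ι x ≠ x)).card := by
    rw [Finset.card_eq_sum_card_fiberwise (f := ψ.f) (t := VA)
      (by intro x hx
          simp only [Finset.mem_coe, Finset.mem_filter, hmemB] at hx
          rw [Finset.mem_coe, hmemVA]
          exact ⟨hx.1.1, hx.2⟩)]
    refine Finset.sum_congr rfl (fun v hv => ?_)
    congr 1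
    ext x
    rw [hmemVA] at hv
    simp only [Finset.mem_filter, hmemB, WGraph.mem_fiber]
    constructor
    · rintro ⟨⟨⟨-, h1⟩, -⟩, h3⟩; exact ⟨h3, h1⟩
    · rintro ⟨h1, h2⟩
      exact ⟨⟨⟨h1 ▸ hv.1, h2⟩, by rw [h1, hv.2]⟩, h1⟩
  -- moved-flag count, part 2: those mapping to a flag, biject with moved flags of A
  have hM2 : ((B.filter (fun x => G₂.ι x ≠ x)).filter
        (fun x => ¬ G₁.r (ψ.f x) = ψ.f x)).card
      = (A.filter (fun x => G₁.ι x ≠ x)).card := by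
    apply Finset.card_bij (fun x _ => ψ.f x)
    · intro x hx
      simp only [Finset.mem_filter, hmemB] at hx
      obtain ⟨⟨hxA, hxmoved⟩, hxflag⟩ := hx
      rw [Finset.mem_filter]
      refine ⟨hxA, fun hcon => ?_⟩
      obtain ⟨y, hy, huniq⟩ := ψ.flag_fiber (ψ.f x) hxflag
      have e1 : G₂.ι x = x := by
        have h1 : ψ.f (G₂.ι x) = ψ.f x := by rw [ψ.comm_i, hcon]
        rw [huniq _ h1, huniq _ rfl]
      exact hxmoved e1
    · intro x hx y hy hxy
      simp only [Finset.mem_filter, hmemB] at hx hy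
      obtain ⟨z, hz, huniq⟩ := ψ.flag_fiber (ψ.f x) hx.2
      rw [huniq x rfl, huniq y hxy.symm]
    · intro f hf
      rw [Finset.mem_filter] at hf
      have hflag : G₁.r f ≠ f := G₁.flag_of_moved hf.2
      obtain ⟨x, hx, huniq⟩ := ψ.flag_fiber f hflag
      refine ⟨x, ?_, hx⟩
      simp only [Finset.mem_filter, hmemB]
      refine ⟨⟨hx.symm ▸ hf.1, fun hcon => ?_⟩, by rw [hx]; exact hflag⟩
      have : G₁.ι f = f := by rw [← hx, ← ψ.comm_i, hcon]
      exact hf.2 this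
  -- edge count
  have hE : (G₂.subEdgeSet B).card
      = (∑ v ∈ VA, (G₂.subEdgeSet (G₂.fiber ψ.f v)).card) + (G₁.subEdgeSet A).card := by
    have h2 : 2 * (G₂.subEdgeSet B).card
        = 2 * ((∑ v ∈ VA, (G₂.subEdgeSet (G₂.fiber ψ.f v)).card) + (G₁.subEdgeSet A).card) := by
      rw [G₂.two_mul_card_subEdgeSet hBι]
      rw [← Finset.card_filter_add_card_filter_not
        (p := fun x => G₁.r (ψ.f x) = ψ.f x) (s := B.filter (fun x => G₂.ι x ≠ x))]
      rw [hM1, hM2, Nat.mul_add, G₁.two_mul_card_subEdgeSet hι, Finset.mul_sum]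
      congr 1
      refine Finset.sum_congr rfl (fun v hv => ?_)
      rw [hmemVA] at hv
      rw [G₂.two_mul_card_subEdgeSet (hfibι v hv.2)]
    exact Nat.eq_of_mul_eq_mul_left (by norm_num) h2
  -- assemble
  have hfg : ∀ v ∈ VA, ((G₂.subEdgeSet (G₂.fiber ψ.f v)).card : ℤ)
      - ((G₂.fiber ψ.f v).filter (fun x => G₂.r x = x)).card
      + ∑ x ∈ (G₂.fiber ψ.f v).filter (fun x => G₂.r x = x), (G₂.w x : ℤ)
      = (G₁.w v : ℤ) - 1 := by
    intro v hv
    rw [hmemVA] at hv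
    have := ψ.fiber_genus v hv.2
    unfold WGraph.subGenus WGraph.subB1 at this
    omega
  have key : (∑ v ∈ VA, ((G₂.subEdgeSet (G₂.fiber ψ.f v)).card : ℤ))
      - (∑ v ∈ VA, (((G₂.fiber ψ.f v).filter (fun x => G₂.r x = x)).card : ℤ))
      + ∑ v ∈ VA, ∑ x ∈ (G₂.fiber ψ.f v).filter (fun x => G₂.r x = x), (G₂.w x : ℤ)
      = (∑ v ∈ VA, (G₁.w v : ℤ)) - VA.card := by
    rw [← Finset.sum_sub_distrib, ← Finset.sum_add_distrib, Finset.sum_congr rfl hfg,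
      Finset.sum_sub_distrib, Finset.sum_const]
    push_cast
    ring
  unfold WGraph.subGenus WGraph.subB1
  rw [hE, hV, hW, ← hVA]
  push_cast
  push_cast at key
  linarith [key]

end GMor
namespace WGraph
open Finset
variable {μ : Type} (G : WGraph μ)

theorem subGenus_singleton_vertex {v : G.X} (hv : G.r v = v) :
    G.subGenus {v} = (G.w v : ℤ) := by
  have h1 : G.subEdgeSet {v} = ∅ := by
    unfold subEdgeSet
    rw [Finset.filter_singleton, if_neg (by simp [G.ι_fix v hv])]
    simp
  have h2 : ({v} : Finset G.X).filter (fun x => G.r x = x) = {v} := by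
    rw [Finset.filter_singleton, if_pos hv]
  unfold subGenus subB1
  rw [h1, h2]
  simp

theorem subConnected_singleton {v : G.X} (hv : G.r v = v) : G.SubConnected {v} := by
  constructor
  · exact ⟨v, Finset.mem_singleton_self v, hv⟩
  · intro a ha b hb _ _
    rw [Finset.mem_singleton] at ha hb
    rw [ha, hb]

end WGraph

namespace GMor
open Finset
variable {μ : Type} {G₂ G₁ G₀ : WGraph μ}

theorem connected_of (ψ : GMor G₂ G₁) (h : G₁.Connected) : G₂.Connected := by
  have := ψ.preimage_subConnected Finset.univ (fun x _ => Finset.mem_univ _)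
    (fun x _ => Finset.mem_univ _) h
  unfold WGraph.Connected
  convert this using 2
  simp

theorem genus_eq (ψ : GMor G₂ G₁) : G₂.genus = G₁.genus := by
  have := ψ.preimage_subGenus Finset.univ (fun x _ => Finset.mem_univ _)
    (fun x _ => Finset.mem_univ _)
  unfold WGraph.genus
  convert this using 3
  simp

/-- The identity morphism. -/
def id' (G : WGraph μ) : GMor G G where
  f := fun x => x
  comm_r _ := rfl
  comm_i _ := rfl
  mark_comm _ := rfl
  flag_fiber y _ := ⟨y, rfl, fun _ h => h⟩
  fiber_conn y hy := by
    have h : G.fiber (fun x => x) y = {y} := by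
      ext x; simp [WGraph.fiber]
    rw [h]; exact G.subConnected_singleton hy
  fiber_genus y hy := by
    have h : G.fiber (fun x => x) y = {y} := by
      ext x; simp [WGraph.fiber]
    rw [h]; exact G.subGenus_singleton_vertex hy

/-- Composition of morphisms. -/
def comp (ψ : GMor G₂ G₁) (φ : GMor G₁ G₀) : GMor G₂ G₀ where
  f := fun x => φ.f (ψ.f x)
  comm_r x := by show φ.f (ψ.f _) = _; rw [ψ.comm_r, φ.comm_r]
  comm_i x := by show φ.f (ψ.f _) = _; rw [ψ.comm_i, φ.comm_i]
  mark_comm j := by show φ.f (ψ.f _) = _; rw [ψ.mark_comm, φ.mark_comm]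
  flag_fiber y hy := by
    obtain ⟨x₁, hx₁, hu₁⟩ := φ.flag_fiber y hy
    have hx₁flag : G₁.r x₁ ≠ x₁ := φ.flag_lift_flag (by rw [hx₁]; exact hy)
    obtain ⟨x₂, hx₂, hu₂⟩ := ψ.flag_fiber x₁ hx₁flag
    exact ⟨x₂, by show φ.f (ψ.f x₂) = y; rw [hx₂, hx₁], fun z hz => hu₂ z (hu₁ _ hz)⟩
  fiber_conn y hy := by
    have hset : G₂.fiber (fun x => φ.f (ψ.f x)) y
        = Finset.univ.filter (fun x => ψ.f x ∈ G₁.fiber φ.f y) := by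
      ext x; simp [WGraph.fiber]
    rw [hset]
    refine ψ.preimage_subConnected _ ?_ ?_ (φ.fiber_conn y hy)
    · intro x hx
      rw [WGraph.mem_fiber] at hx ⊢
      rw [φ.comm_r, hx, hy]
    · intro x hx
      rw [WGraph.mem_fiber] at hx ⊢
      rw [φ.comm_i, hx, G₀.ι_fix y hy]
  fiber_genus y hy := by
    have hset : G₂.fiber (fun x => φ.f (ψ.f x)) y
        = Finset.univ.filter (fun x => ψ.f x ∈ G₁.fiber φ.f y) := by
      ext x; simp [WGraph.fiber]
    rw [hset]
    rw [ψ.preimage_subGenus _ ?_ ?_]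
    · exact φ.fiber_genus y hy
    · intro x hx
      rw [WGraph.mem_fiber] at hx ⊢
      rw [φ.comm_r, hx, hy]
    · intro x hx
      rw [WGraph.mem_fiber] at hx ⊢
      rw [φ.comm_i, hx, G₀.ι_fix y hy]

theorem contractedSet_subset_edgeSet (φ : GMor G₂ G₁) :
    φ.contractedSet ⊆ G₂.edgeSet := by
  intro e he
  unfold GMor.contractedSet at he
  obtain ⟨x, hx, rfl⟩ := Finset.mem_image.1 he
  rw [Finset.mem_filter] at hx
  unfold WGraph.edgeSet WGraph.subEdgeSet
  exact Finset.mem_image_of_mem _ (by rw [Finset.mem_filter]; exact ⟨Finset.mem_univ _, hx.2.1⟩)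

end GMor
namespace WGraph
open Finset

variable {μ : Type} (G : WGraph μ)

/-- The measure used for the induction. -/
def measure : ℕ := ∑ v ∈ G.vertexFinset, (3 * G.w v + (G.val v - 3))

/-- Move 1: decrease the weight of `v` by one and add a loop at `v`. -/
@[reducible]
def move1 (v : G.X) (hv : G.r v = v) : WGraph μ where
  X := G.X ⊕ Fin 2
  fin := inferInstance
  deq := inferInstance
  r := Sum.elim (fun x => Sum.inl (G.r x)) (fun _ => Sum.inl v)
  ι := Sum.elim (fun x => Sum.inl (G.ι x)) (fun i => Sum.inr (i + 1))
  r_idem := by rintro (x | i) <;> simp [G.r_idem, hv]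
  ι_invol := by
    rintro (x | i)
    · simp [G.ι_invol]
    · simp only [Sum.elim_inr]
      congr 1
      omega
  ι_fix := by rintro (x | i) h <;> simp_all [G.ι_fix]
  w := Sum.elim (fun x => if x = v then G.w x - 1 else G.w x) (fun _ => 0)
  mark := fun j => Sum.inl (G.mark j)
  mark_flag := by intro j; simp [G.mark_flag j]
  mark_leg := by intro j; simp [G.mark_leg j]
  mark_inj := by intro a b h; simp only [Sum.inl.injEq] at h; exact G.mark_inj h
  mark_surj := by
    rintro (x | i) h1 h2
    · simp only [Sum.elim_inl, Sum.inl.injEq, ne_eq] at h1 h2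
      obtain ⟨j, hj⟩ := G.mark_surj x h1 h2
      exact ⟨j, by simp [hj]⟩
    · simp only [Sum.elim_inr, Sum.inr.injEq] at h2
      omega

/-- The contraction morphism from `move1` to `G`. -/
def move1GMor (v : G.X) (hv : G.r v = v) (hw : 1 ≤ G.w v) :
    GMor (G.move1 v hv) G where
  f := Sum.elim id (fun _ => v)
  comm_r := by rintro (x | i) <;> simp [move1, hv]
  comm_i := by rintro (x | i) <;> simp [move1, G.ι_fix v hv]
  mark_comm := by intro j; simp [move1]
  flag_fiber := by
    intro y hy
    refine ⟨Sum.inl y, rfl, ?_⟩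
    rintro (x | i) hx
    · exact congrArg Sum.inl (by simpa using hx)
    · simp only [Sum.elim_inr] at hx
      rw [← hx] at hy
      exact absurd hv hy
  fiber_conn := by
    intro y hy
    by_cases h : y = v
    · subst h
      constructor
      · refine ⟨Sum.inl y, ?_, by simp [move1, hy]⟩
        rw [mem_fiber]; simp
      · intro a ha b hb haa hbb
        have hver : ∀ c, c ∈ (G.move1 y hv).fiber (Sum.elim id fun _ => y) y →
            (G.move1 y hv).r c = c → c = Sum.inl y := by
          rintro (c | i) hc hcc
          · rw [mem_fiber] at hc
            simp only [Sum.elim_inl, id_eq] at hc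
            rw [hc]
          · simp only [move1, Sum.elim_inr] at hcc
            exact absurd hcc (by simp)
        rw [hver a ha haa, hver b hb hbb]
    · have hfib : (G.move1 v hv).fiber (Sum.elim id fun _ => v) y = {Sum.inl y} := by
        ext x
        rw [mem_fiber]
        rcases x with x | i
        · simp only [Sum.elim_inl, id_eq, Finset.mem_singleton]
          exact ⟨congrArg Sum.inl, Sum.inl.inj⟩
        · simp [Ne.symm h]
      rw [hfib]
      refine ⟨⟨Sum.inl y, Finset.mem_singleton_self _, by simp [move1, hy]⟩, ?_⟩
      intro a ha b hb _ _
      rw [Finset.mem_singleton] at ha hb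
      rw [ha, hb]
  fiber_genus := by
    intro y hy
    by_cases h : y = v
    · subst h
      have hfib : (G.move1 y hv).fiber (Sum.elim id fun _ => y) y
          = {Sum.inl y, Sum.inr 0, Sum.inr 1} := by
        ext x
        rw [mem_fiber]
        rcases x with x | i
        · simp only [Sum.elim_inl, id_eq, Finset.mem_insert, Finset.mem_singleton]
          constructor
          · intro hh; exact Or.inl (congrArg Sum.inl hh)
          · rintro (hh | hh | hh)
            · exact Sum.inl.inj hh
            · exact absurd hh (by simp)
            · exact absurd hh (by simp)
        · simp only [Sum.elim_inr, Finset.mem_insert, Finset.mem_singleton, true_iff,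
            eq_self_iff_true]
          have : i = 0 ∨ i = 1 := by omega
          rcases this with rfl | rfl <;> simp
      rw [hfib]
      have hvert : ({Sum.inl y, Sum.inr 0, Sum.inr 1} : Finset (G.move1 y hv).X).filter
          (fun x => (G.move1 y hv).r x = x) = {Sum.inl y} := by
        rw [show ({Sum.inl y, Sum.inr 0, Sum.inr 1} : Finset (G.move1 y hv).X)
            = insert (Sum.inl y) {Sum.inr 0, Sum.inr 1} from rfl]
        rw [Finset.filter_insert, if_pos (by simp [move1, hy]),
          Finset.filter_insert, if_neg (by simp [move1]),
          Finset.filter_singleton, if_neg (by simp [move1])]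
        rfl
      have hmoved : ({Sum.inl y, Sum.inr 0, Sum.inr 1} : Finset (G.move1 y hv).X).filter
          (fun x => (G.move1 y hv).ι x ≠ x) = {Sum.inr 0, Sum.inr 1} := by
        rw [show ({Sum.inl y, Sum.inr 0, Sum.inr 1} : Finset (G.move1 y hv).X)
            = insert (Sum.inl y) {Sum.inr 0, Sum.inr 1} from rfl]
        rw [Finset.filter_insert, if_neg (by simp [move1, G.ι_fix y hy]),
          Finset.filter_insert, if_pos (by simp [move1]),
          Finset.filter_singleton, if_pos (by simp [move1])]
      have hedge : (G.move1 y hv).subEdgeSet {Sum.inl y, Sum.inr 0, Sum.inr 1}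
          = {({Sum.inr 0, Sum.inr 1} : Finset (G.move1 y hv).X)} := by
        unfold subEdgeSet
        rw [hmoved]
        rw [Finset.image_insert, Finset.image_singleton]
        have e0 : (G.move1 y hv).ι (Sum.inr 0) = Sum.inr 1 := rfl
        have e1 : (G.move1 y hv).ι (Sum.inr 1) = Sum.inr 0 := rfl
        rw [e0, e1, Finset.pair_comm (Sum.inr 1) (Sum.inr 0)]
        simp
      unfold subGenus subB1
      rw [hedge, hvert]
      simp only [Finset.card_singleton, Finset.sum_singleton]
      have hw2 : (G.move1 y hv).w (Sum.inl y) = G.w y - 1 := by simp [move1]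
      simp only [Sum.elim_inl, ↓reduceIte]
      have : ((G.w y - 1 : ℕ) : ℤ) = (G.w y : ℤ) - 1 := by
        have := hw; push_cast [Nat.cast_sub this]; ring
      rw [this]
      ring
    · have hfib : (G.move1 v hv).fiber (Sum.elim id fun _ => v) y = {Sum.inl y} := by
        ext x
        rw [mem_fiber]
        rcases x with x | i
        · simp only [Sum.elim_inl, id_eq, Finset.mem_singleton]
          exact ⟨congrArg Sum.inl, Sum.inl.inj⟩
        · simp [Ne.symm h]
      rw [hfib, (G.move1 v hv).subGenus_singleton_vertex (by simp [move1, hy])]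
      simp [move1, h]

end WGraph
namespace WGraph
open Finset

variable {μ : Type} (G : WGraph μ)

theorem move1_val (v : G.X) (hv : G.r v = v) (u : G.X) :
    (G.move1 v hv).val (Sum.inl u) = G.val u + (if u = v then 2 else 0) := by
  classical
  unfold val
  rw [card_filter_sum_type]
  have h1 : (univ.filter fun a : G.X => ((G.move1 v hv).r (Sum.inl a) ≠ Sum.inl a
      ∧ (G.move1 v hv).r (Sum.inl a) = Sum.inl u)).card
      = (univ.filter fun x : G.X => (G.r x ≠ x ∧ G.r x = u)).card := by
    congr 1
    apply Finset.filter_congr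
    intro x _
    simp [move1]
  have h2 : (univ.filter fun i : Fin 2 => ((G.move1 v hv).r (Sum.inr i) ≠ Sum.inr i
      ∧ (G.move1 v hv).r (Sum.inr i) = Sum.inl u)).card = if u = v then 2 else 0 := by
    by_cases h : u = v
    · rw [if_pos h]
      rw [Finset.filter_true_of_mem (fun i _ => by simp [move1, h])]
      simp
    · rw [if_neg h]
      rw [Finset.filter_false_of_mem (fun i _ => by simp [move1]; intro hvu; exact h hvu.symm)]
      simp
  rw [h1, h2]

theorem move1_stable (v : G.X) (hv : G.r v = v) (hw : 1 ≤ G.w v) (hst : G.Stable) :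
    (G.move1 v hv).Stable := by
  rintro (x | i) hx
  · have hxv : G.r x = x := by
      have := hx
      unfold IsVertex at this
      simpa [move1] using this
    have hval := G.move1_val v hv x
    have hw2 : (G.move1 v hv).w (Sum.inl x) = if x = v then G.w x - 1 else G.w x := by
      simp [move1]
    rw [hval, hw2]
    by_cases h : x = v
    · subst h
      have := hst x hxv
      rw [if_pos rfl, if_pos rfl]
      push_cast
      omega
    · have := hst x hxv
      rw [if_neg h, if_neg h]
      push_cast
      omega
  · exact absurd hx (by unfold IsVertex; simp [move1])

theorem move1_measure (v : G.X) (hv : G.r v = v) (hw : 1 ≤ G.w v) :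
    (G.move1 v hv).measure < G.measure := by
  classical
  unfold measure
  have hsum : (G.move1 v hv).vertexFinset.sum
        (fun x => 3 * (G.move1 v hv).w x + ((G.move1 v hv).val x - 3))
      = ∑ x ∈ G.vertexFinset,
        (3 * (G.move1 v hv).w (Sum.inl x) + ((G.move1 v hv).val (Sum.inl x) - 3)) := by
    unfold vertexFinset
    erw [sum_filter_sum_type]
    have e2 : (univ.filter fun i : Fin 2 => (G.move1 v hv).r (Sum.inr i) = Sum.inr i) = ∅ := by
      apply Finset.filter_false_of_mem
      intro i _
      simp [move1]
    rw [e2, Finset.sum_empty, add_zero]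
    congr 1
    apply Finset.filter_congr
    intro x _
    simp [move1]
  rw [hsum]
  apply Finset.sum_lt_sum
  · intro x hx
    rw [G.move1_val v hv x]
    have hw2 : (G.move1 v hv).w (Sum.inl x) = if x = v then G.w x - 1 else G.w x := by
      simp [move1]
    rw [hw2]
    by_cases h : x = v
    · subst h
      rw [if_pos rfl, if_pos rfl]
      omega
    · rw [if_neg h, if_neg h]
      omega
  · refine ⟨v, by rw [vertexFinset, Finset.mem_filter]; exact ⟨Finset.mem_univ _, hv⟩, ?_⟩
    rw [G.move1_val v hv v]
    have hw2 : (G.move1 v hv).w (Sum.inl v) = G.w v - 1 := by simp [move1]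
    rw [hw2, if_pos rfl]
    omega

end WGraph
namespace WGraph
open Finset

variable {μ : Type} (G : WGraph μ)

section move2

/-- Move 2: split the vertex `v`, moving the flags `f₁, f₂` to a new vertex `v'`
joined to `v` by a new edge. -/
@[reducible]
def move2 (v f₁ f₂ : G.X) (hv : G.r v = v) (hf₁ : G.r f₁ = v) (hf₂ : G.r f₂ = v)
    (hfl₁ : G.r f₁ ≠ f₁) (hfl₂ : G.r f₂ ≠ f₂) : WGraph μ where
  X := G.X ⊕ Fin 3
  fin := inferInstance
  deq := inferInstance
  r := Sum.elim
    (fun x => if x = f₁ ∨ x = f₂ then Sum.inr 0 else Sum.inl (G.r x))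
    (fun i => if i = 1 then Sum.inl v else Sum.inr 0)
  ι := Sum.elim (fun x => Sum.inl (G.ι x))
    (fun i => Sum.inr (if i = 1 then 2 else if i = 2 then 1 else 0))
  r_idem := by
    have hvert : ∀ x : G.X, ¬ (G.r x = f₁ ∨ G.r x = f₂) := by
      rintro x (h | h)
      · exact hfl₁ (by rw [← h, G.r_idem])
      · exact hfl₂ (by rw [← h, G.r_idem])
    rintro (x | i)
    · by_cases h : x = f₁ ∨ x = f₂
      · simp [h]
      · simp only [Sum.elim_inl, if_neg h]
        rw [if_neg (hvert x), G.r_idem]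
    · fin_cases i <;> simp
      · rw [if_neg (show ¬ (v = f₁ ∨ v = f₂) by
            rintro (h | h); exacts [hfl₁ (h ▸ hv), hfl₂ (h ▸ hv)]), hv]
  ι_invol := by
    rintro (x | i)
    · simp [G.ι_invol]
    · fin_cases i <;> simp
  ι_fix := by
    rintro (x | i) h
    · by_cases hc : x = f₁ ∨ x = f₂
      · rw [Sum.elim_inl, if_pos hc] at h
        exact absurd h (by simp)
      · rw [Sum.elim_inl, if_neg hc, Sum.inl.injEq] at h
        simp [G.ι_fix x h]
    · fin_cases i <;> simp_all
  w := Sum.elim G.w (fun _ => 0)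
  mark := fun j => Sum.inl (G.mark j)
  mark_flag := by
    intro j
    by_cases hc : G.mark j = f₁ ∨ G.mark j = f₂
    · rw [Sum.elim_inl, if_pos hc]; simp
    · rw [Sum.elim_inl, if_neg hc]
      simp [G.mark_flag j]
  mark_leg := by intro j; simp [G.mark_leg j]
  mark_inj := by intro a b h; simp only [Sum.inl.injEq] at h; exact G.mark_inj h
  mark_surj := by
    rintro (x | i) h1 h2
    · simp only [Sum.elim_inl, Sum.inl.injEq] at h2
      have hflag : G.r x ≠ x := by
        intro hver
        apply h1
        rw [Sum.elim_inl, if_neg (by rintro (h | h); exacts [hfl₁ (h ▸ hver), hfl₂ (h ▸ hver)])]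
        rw [hver]
      obtain ⟨j, hj⟩ := G.mark_surj x hflag h2
      exact ⟨j, by simp [hj]⟩
    · exfalso
      fin_cases i <;> simp_all
  
/-- The contraction morphism from `move2` to `G`. -/
def move2GMor (v f₁ f₂ : G.X) (hv : G.r v = v) (hf₁ : G.r f₁ = v) (hf₂ : G.r f₂ = v)
    (hfl₁ : G.r f₁ ≠ f₁) (hfl₂ : G.r f₂ ≠ f₂) (hw0 : G.w v = 0) :
    GMor (G.move2 v f₁ f₂ hv hf₁ hf₂ hfl₁ hfl₂) G where
  f := Sum.elim id (fun _ => v)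
  comm_r := by
    rintro (x | i)
    · by_cases hc : x = f₁ ∨ x = f₂
      · simp only [move2, Sum.elim_inl, if_pos hc, id_eq]
        rcases hc with rfl | rfl
        · exact (congrArg (Sum.elim id fun _ => v) rfl).trans hf₁.symm
        · exact (congrArg (Sum.elim id fun _ => v) rfl).trans hf₂.symm
      · simp [move2, if_neg hc]
    · fin_cases i <;> simp [move2, hv]
  comm_i := by
    rintro (x | i)
    · simp [move2]
    · fin_cases i <;> simp [move2, G.ι_fix v hv]
  mark_comm := by intro j; simp [move2]
  flag_fiber := by
    intro y hy
    have hyv : y ≠ v := fun h => hy (h ▸ hv)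
    refine ⟨Sum.inl y, rfl, ?_⟩
    rintro (x | i) hx
    · exact congrArg Sum.inl (by simpa using hx)
    · simp only [Sum.elim_inr] at hx
      exact absurd hx hyv.symm
  fiber_conn := by
    intro y hy
    by_cases h : y = v
    · subst h
      have hnp : ¬ (y = f₁ ∨ y = f₂) := by
        rintro (rfl | rfl); exacts [hfl₁ hy, hfl₂ hy]
      have hver : ∀ c : (G.move2 y f₁ f₂ hv hf₁ hf₂ hfl₁ hfl₂).X, c ∈ (G.move2 y f₁ f₂ hv hf₁ hf₂ hfl₁ hfl₂).fiber (Sum.elim id fun _ => y) y → (G.move2 y f₁ f₂ hv hf₁ hf₂ hfl₁ hfl₂).r c = c →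
          c = Sum.inl y ∨ c = Sum.inr 0 := by
        rintro (c | i) hc hcc
        · left
          rw [mem_fiber] at hc
          simp only [Sum.elim_inl, id_eq] at hc
          rw [hc]
        · fin_cases i
          · exact Or.inr rfl
          · exfalso
            simp [move2] at hcc
          · exfalso
            simp [move2] at hcc
      have hstep1 : (G.move2 y f₁ f₂ hv hf₁ hf₂ hfl₁ hfl₂).subAdj ((G.move2 y f₁ f₂ hv hf₁ hf₂ hfl₁ hfl₂).fiber (Sum.elim id fun _ => y) y) (Sum.inl y) (Sum.inr 0) := by
        refine ⟨Sum.inr 1, (mem_fiber _ _ _).2 rfl, ?_, ?_, ?_⟩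
        · simp [move2]
        · simp [move2]
        · simp [move2]
      have hstep2 : (G.move2 y f₁ f₂ hv hf₁ hf₂ hfl₁ hfl₂).subAdj ((G.move2 y f₁ f₂ hv hf₁ hf₂ hfl₁ hfl₂).fiber (Sum.elim id fun _ => y) y) (Sum.inr 0) (Sum.inl y) := by
        refine ⟨Sum.inr 2, (mem_fiber _ _ _).2 rfl, ?_, ?_, ?_⟩
        · simp [move2]
        · simp [move2]
        · simp [move2]
      constructor
      · exact ⟨Sum.inl y, (mem_fiber _ _ _).2 rfl, by simp [move2, hnp, hy]⟩
      · intro a ha b hb haa hbb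
        rcases hver a ha haa with rfl | rfl <;> rcases hver b hb hbb with rfl | rfl
        · exact Relation.ReflTransGen.refl
        · exact Relation.ReflTransGen.single hstep1
        · exact Relation.ReflTransGen.single hstep2
        · exact Relation.ReflTransGen.refl
    · have hfib : (G.move2 v f₁ f₂ hv hf₁ hf₂ hfl₁ hfl₂).fiber
          (Sum.elim id fun _ => v) y = {Sum.inl y} := by
        ext x
        rw [mem_fiber]
        rcases x with x | i
        · simp only [Sum.elim_inl, id_eq, Finset.mem_singleton]
          exact ⟨congrArg Sum.inl, Sum.inl.inj⟩
        · simp [Ne.symm h]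
      rw [hfib]
      refine ⟨⟨Sum.inl y, Finset.mem_singleton_self _, ?_⟩, ?_⟩
      · have hnp : ¬ (y = f₁ ∨ y = f₂) := by
          rintro (rfl | rfl); exacts [hfl₁ hy, hfl₂ hy]
        simp [move2, hnp, hy]
      · intro a ha b hb _ _
        rw [Finset.mem_singleton] at ha hb
        rw [ha, hb]
  fiber_genus := by
    intro y hy
    by_cases h : y = v
    · subst h
      have hfib : (G.move2 y f₁ f₂ hv hf₁ hf₂ hfl₁ hfl₂).fiber (Sum.elim id fun _ => y) y
          = {Sum.inl y, Sum.inr 0, Sum.inr 1, Sum.inr 2} := by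
        ext x
        rw [mem_fiber]
        rcases x with x | i
        · simp only [Sum.elim_inl, id_eq, Finset.mem_insert, Finset.mem_singleton]
          constructor
          · intro hh; exact Or.inl (congrArg Sum.inl hh)
          · rintro (hh | hh | hh | hh)
            · exact Sum.inl.inj hh
            all_goals exact absurd hh (by simp)
        · simp only [Sum.elim_inr, Finset.mem_insert, Finset.mem_singleton, true_iff]
          fin_cases i <;> simp
      rw [hfib]
      have hnotpair : ¬ (y = f₁ ∨ y = f₂) := by
        rintro (rfl | rfl) <;> [exact hfl₁ (by rw [hy]); exact hfl₂ (by rw [hy])]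
      have hvert : ({Sum.inl y, Sum.inr 0, Sum.inr 1, Sum.inr 2} : Finset (G.move2 y f₁ f₂ hv hf₁ hf₂ hfl₁ hfl₂).X).filter
          (fun x => (G.move2 y f₁ f₂ hv hf₁ hf₂ hfl₁ hfl₂).r x = x) = {Sum.inl y, Sum.inr 0} := by
        rw [show ({Sum.inl y, Sum.inr 0, Sum.inr 1, Sum.inr 2} : Finset (G.move2 y f₁ f₂ hv hf₁ hf₂ hfl₁ hfl₂).X)
            = insert (Sum.inl y) (insert (Sum.inr 0) {Sum.inr 1, Sum.inr 2}) from rfl]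
        rw [Finset.filter_insert, if_pos (by simp [move2, hnotpair, hy]),
          Finset.filter_insert, if_pos (by simp [move2]),
          Finset.filter_insert, if_neg (by simp [move2]),
          Finset.filter_singleton, if_neg (by simp [move2])]
        simp
      have hmoved : ({Sum.inl y, Sum.inr 0, Sum.inr 1, Sum.inr 2} : Finset (G.move2 y f₁ f₂ hv hf₁ hf₂ hfl₁ hfl₂).X).filter
          (fun x => (G.move2 y f₁ f₂ hv hf₁ hf₂ hfl₁ hfl₂).ι x ≠ x) = {Sum.inr 1, Sum.inr 2} := by
        rw [show ({Sum.inl y, Sum.inr 0, Sum.inr 1, Sum.inr 2} : Finset (G.move2 y f₁ f₂ hv hf₁ hf₂ hfl₁ hfl₂).X)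
            = insert (Sum.inl y) (insert (Sum.inr 0) {Sum.inr 1, Sum.inr 2}) from rfl]
        rw [Finset.filter_insert, if_neg (by simp [move2, G.ι_fix y hy]),
          Finset.filter_insert, if_neg (by simp [move2]),
          Finset.filter_insert, if_pos (by simp [move2]),
          Finset.filter_singleton, if_pos (by simp [move2])]
      have hedge : (G.move2 y f₁ f₂ hv hf₁ hf₂ hfl₁ hfl₂).subEdgeSet {Sum.inl y, Sum.inr 0, Sum.inr 1, Sum.inr 2}
          = {({Sum.inr 1, Sum.inr 2} : Finset (G.move2 y f₁ f₂ hv hf₁ hf₂ hfl₁ hfl₂).X)} := by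
        unfold subEdgeSet
        rw [hmoved, Finset.image_insert, Finset.image_singleton]
        have e1 : (G.move2 y f₁ f₂ hv hf₁ hf₂ hfl₁ hfl₂).ι (Sum.inr 1) = Sum.inr 2 := rfl
        have e2 : (G.move2 y f₁ f₂ hv hf₁ hf₂ hfl₁ hfl₂).ι (Sum.inr 2) = Sum.inr 1 := rfl
        rw [e1, e2, Finset.pair_comm (Sum.inr 2) (Sum.inr 1)]
        simp
      unfold subGenus subB1
      rw [hedge, hvert]
      rw [Finset.card_pair (by simp), Finset.sum_pair (by simp)]
      have hwy : (G.move2 y f₁ f₂ hv hf₁ hf₂ hfl₁ hfl₂).w (Sum.inl y) = G.w y := rfl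
      have hw0' : (G.move2 y f₁ f₂ hv hf₁ hf₂ hfl₁ hfl₂).w (Sum.inr 0) = 0 := rfl
      rw [hwy, hw0', hw0]
      simp
    · have hfib : (G.move2 v f₁ f₂ hv hf₁ hf₂ hfl₁ hfl₂).fiber
          (Sum.elim id fun _ => v) y = {Sum.inl y} := by
        ext x
        rw [mem_fiber]
        rcases x with x | i
        · simp only [Sum.elim_inl, id_eq, Finset.mem_singleton]
          exact ⟨congrArg Sum.inl, Sum.inl.inj⟩
        · simp [Ne.symm h]
      have hnotpair : ¬ (y = f₁ ∨ y = f₂) := by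
        rintro (rfl | rfl) <;> [exact hfl₁ (by rw [hy]); exact hfl₂ (by rw [hy])]
      rw [hfib, subGenus_singleton_vertex _ (by simp [move2, hnotpair, hy])]
      rfl

end move2

end WGraph
namespace WGraph
open Finset

variable {μ : Type} (G : WGraph μ)

section move2lemmas

variable (v f₁ f₂ : G.X) (hv : G.r v = v) (hf₁ : G.r f₁ = v) (hf₂ : G.r f₂ = v)
  (hfl₁ : G.r f₁ ≠ f₁) (hfl₂ : G.r f₂ ≠ f₂) (hne : f₁ ≠ f₂)

include hv hf₁ hf₂ hfl₁ hfl₂ hne in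
theorem move2_val_inl (u : G.X) :
    (G.move2 v f₁ f₂ hv hf₁ hf₂ hfl₁ hfl₂).val (Sum.inl u)
      = (G.val u - (if u = v then 2 else 0)) + (if u = v then 1 else 0) := by
  classical
  unfold val
  rw [card_filter_sum_type]
  by_cases h : u = v
  · subst h
    have h1 : (univ.filter fun a : G.X =>
        ((G.move2 u f₁ f₂ hv hf₁ hf₂ hfl₁ hfl₂).r (Sum.inl a) ≠ Sum.inl a
          ∧ (G.move2 u f₁ f₂ hv hf₁ hf₂ hfl₁ hfl₂).r (Sum.inl a) = Sum.inl u))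
        = (univ.filter fun x : G.X => (G.r x ≠ x ∧ G.r x = u)) \ {f₁, f₂} := by
      ext x
      rw [Finset.mem_sdiff, Finset.mem_filter, Finset.mem_filter]
      by_cases hc : x = f₁ ∨ x = f₂
      · simp only [move2, Sum.elim_inl, if_pos hc]
        apply iff_of_false
        · rintro ⟨-, -, hcon⟩; exact absurd hcon (by simp)
        · rintro ⟨-, hcon⟩
          exact absurd (show x ∈ ({f₁, f₂} : Finset G.X) by simpa using hc) hcon
      · simp only [move2, Sum.elim_inl, if_neg hc, Sum.inl.injEq, ne_eq]
        constructor
        · rintro ⟨-, h1, h2⟩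
          exact ⟨⟨Finset.mem_univ _, h1, h2⟩,
            by simpa using hc⟩
        · rintro ⟨⟨-, h1, h2⟩, -⟩
          exact ⟨Finset.mem_univ _, h1, h2⟩
    have hsub : ({f₁, f₂} : Finset G.X) ⊆ univ.filter fun x => (G.r x ≠ x ∧ G.r x = u) := by
      intro x hx
      rcases Finset.mem_insert.1 hx with rfl | hx
      · exact Finset.mem_filter.2 ⟨Finset.mem_univ _, hfl₁, hf₁⟩
      · rw [Finset.mem_singleton] at hx
        subst hx
        exact Finset.mem_filter.2 ⟨Finset.mem_univ _, hfl₂, hf₂⟩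
    have h2 : (univ.filter fun i : Fin 3 =>
        ((G.move2 u f₁ f₂ hv hf₁ hf₂ hfl₁ hfl₂).r (Sum.inr i) ≠ Sum.inr i
          ∧ (G.move2 u f₁ f₂ hv hf₁ hf₂ hfl₁ hfl₂).r (Sum.inr i) = Sum.inl u))
        = {1} := by
      ext i
      fin_cases i <;> simp [move2]
    rw [h1, h2, Finset.card_sdiff_of_subset hsub, Finset.card_pair hne, Finset.card_singleton]
    simp [val]
  · have h1 : (univ.filter fun a : G.X =>
        ((G.move2 v f₁ f₂ hv hf₁ hf₂ hfl₁ hfl₂).r (Sum.inl a) ≠ Sum.inl a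
          ∧ (G.move2 v f₁ f₂ hv hf₁ hf₂ hfl₁ hfl₂).r (Sum.inl a) = Sum.inl u))
        = univ.filter fun x : G.X => (G.r x ≠ x ∧ G.r x = u) := by
      apply Finset.filter_congr
      intro x _
      by_cases hc : x = f₁ ∨ x = f₂
      · have hru : G.r x = v := by
          rcases hc with rfl | rfl
          exacts [hf₁, hf₂]
        simp only [move2, Sum.elim_inl, if_pos hc]
        apply iff_of_false
        · rintro ⟨-, hcon⟩; exact absurd hcon (by simp)
        · rintro ⟨-, hcon⟩
          exact h (by rw [← hcon, hru])
      · simp only [move2, Sum.elim_inl, if_neg hc, Sum.inl.injEq, ne_eq]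
    have h2 : (univ.filter fun i : Fin 3 =>
        ((G.move2 v f₁ f₂ hv hf₁ hf₂ hfl₁ hfl₂).r (Sum.inr i) ≠ Sum.inr i
          ∧ (G.move2 v f₁ f₂ hv hf₁ hf₂ hfl₁ hfl₂).r (Sum.inr i) = Sum.inl u))
        = ∅ := by
      ext i
      fin_cases i
      · rw [Finset.mem_filter]; simp [move2]
      · rw [Finset.mem_filter]
        simp only [move2, Sum.elim_inr]
        simp only [Finset.mem_filter, Finset.mem_univ, true_and, Finset.notMem_empty,
          iff_false]
        rintro ⟨-, hcon⟩
        exact h (Sum.inl.inj hcon).symm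
      · rw [Finset.mem_filter]; simp [move2]
    rw [h1, h2, if_neg h, if_neg h]
    simp [val]

include hv hf₁ hf₂ hfl₁ hfl₂ hne in
theorem move2_val_inr0 :
    (G.move2 v f₁ f₂ hv hf₁ hf₂ hfl₁ hfl₂).val (Sum.inr 0) = 3 := by
  classical
  unfold val
  rw [card_filter_sum_type]
  have h1 : (univ.filter fun a : G.X =>
      ((G.move2 v f₁ f₂ hv hf₁ hf₂ hfl₁ hfl₂).r (Sum.inl a) ≠ Sum.inl a
        ∧ (G.move2 v f₁ f₂ hv hf₁ hf₂ hfl₁ hfl₂).r (Sum.inl a) = Sum.inr 0))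
      = {f₁, f₂} := by
    ext x
    rw [Finset.mem_filter, Finset.mem_insert, Finset.mem_singleton]
    by_cases hc : x = f₁ ∨ x = f₂
    · simp only [move2, Sum.elim_inl, if_pos hc]
      refine ⟨fun _ => hc, fun _ => ⟨Finset.mem_univ _, by simp, by trivial⟩⟩
    · simp only [move2, Sum.elim_inl, if_neg hc]
      constructor
      · rintro ⟨-, -, hcon⟩; exact absurd hcon (by simp)
      · intro hcon; exact absurd hcon hc
  have h2 : (univ.filter fun i : Fin 3 =>
      ((G.move2 v f₁ f₂ hv hf₁ hf₂ hfl₁ hfl₂).r (Sum.inr i) ≠ Sum.inr i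
        ∧ (G.move2 v f₁ f₂ hv hf₁ hf₂ hfl₁ hfl₂).r (Sum.inr i) = Sum.inr 0))
      = {2} := by
    ext i
    fin_cases i <;> simp [move2]
  rw [h1, h2, Finset.card_pair hne, Finset.card_singleton]

include hne in
theorem move2_stable (hw0 : G.w v = 0) (hval4 : 4 ≤ G.val v) (hst : G.Stable) :
    (G.move2 v f₁ f₂ hv hf₁ hf₂ hfl₁ hfl₂).Stable := by
  rintro (x | i) hx
  · have hnp : ¬ (x = f₁ ∨ x = f₂) := by
      intro hc
      have hxx := hx
      unfold IsVertex at hxx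
      rw [show (G.move2 v f₁ f₂ hv hf₁ hf₂ hfl₁ hfl₂).r (Sum.inl x) = Sum.inr 0 from by
        simp only [move2, Sum.elim_inl, if_pos hc]] at hxx
      exact absurd hxx (by simp)
    have hxv : G.r x = x := by
      have hxx := hx
      unfold IsVertex at hxx
      simp only [move2, Sum.elim_inl, if_neg hnp, Sum.inl.injEq] at hxx
      exact hxx
    have hval := G.move2_val_inl v f₁ f₂ hv hf₁ hf₂ hfl₁ hfl₂ hne x
    have hw2 : (G.move2 v f₁ f₂ hv hf₁ hf₂ hfl₁ hfl₂).w (Sum.inl x) = G.w x := rfl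
    show (0 : ℤ) < 2 * ((G.move2 v f₁ f₂ hv hf₁ hf₂ hfl₁ hfl₂).w (Sum.inl x) : ℤ) - 2
      + ((G.move2 v f₁ f₂ hv hf₁ hf₂ hfl₁ hfl₂).val (Sum.inl x) : ℤ)
    rw [hval, hw2]
    by_cases h : x = v
    · subst h
      rw [if_pos rfl, if_pos rfl, hw0]
      push_cast
      omega
    · rw [if_neg h, if_neg h]
      have := hst x hxv
      push_cast
      omega
  · fin_cases i
    · have hval := G.move2_val_inr0 v f₁ f₂ hv hf₁ hf₂ hfl₁ hfl₂ hne
      show (0 : ℤ) < 2 * ((G.move2 v f₁ f₂ hv hf₁ hf₂ hfl₁ hfl₂).w (Sum.inr 0) : ℤ) - 2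
        + ((G.move2 v f₁ f₂ hv hf₁ hf₂ hfl₁ hfl₂).val (Sum.inr 0) : ℤ)
      rw [hval, show (G.move2 v f₁ f₂ hv hf₁ hf₂ hfl₁ hfl₂).w (Sum.inr 0) = 0 from rfl]
      norm_num
    · exact absurd hx (by unfold IsVertex; simp [move2])
    · exact absurd hx (by unfold IsVertex; simp [move2])

include hne in
theorem move2_measure (hw0 : G.w v = 0) (hval4 : 4 ≤ G.val v) :
    (G.move2 v f₁ f₂ hv hf₁ hf₂ hfl₁ hfl₂).measure < G.measure := by
  classical
  unfold measure
  set G₂ := G.move2 v f₁ f₂ hv hf₁ hf₂ hfl₁ hfl₂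
  have hsum : G₂.vertexFinset.sum (fun x => 3 * G₂.w x + (G₂.val x - 3))
      = (∑ x ∈ G.vertexFinset, (3 * G₂.w (Sum.inl x) + (G₂.val (Sum.inl x) - 3)))
        + (3 * G₂.w (Sum.inr 0) + (G₂.val (Sum.inr 0) - 3)) := by
    unfold vertexFinset
    erw [sum_filter_sum_type]
    have e1 : (univ.filter fun a : G.X => G₂.r (Sum.inl a) = Sum.inl a)
        = univ.filter (fun x : G.X => G.r x = x) := by
      apply Finset.filter_congr
      intro x _
      constructor
      · intro hh
        by_cases hc : x = f₁ ∨ x = f₂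
        · rw [show G₂.r (Sum.inl x) = Sum.inr 0 from by
            simp only [G₂, move2, Sum.elim_inl, if_pos hc]] at hh
          exact absurd hh (by simp)
        · rw [show G₂.r (Sum.inl x) = Sum.inl (G.r x) from by
            simp only [G₂, move2, Sum.elim_inl, if_neg hc]] at hh
          exact Sum.inl.inj hh
      · intro hh
        have hc : ¬ (x = f₁ ∨ x = f₂) := by
          rintro (rfl | rfl); exacts [hfl₁ hh, hfl₂ hh]
        rw [show G₂.r (Sum.inl x) = Sum.inl (G.r x) from by
          simp only [G₂, move2, Sum.elim_inl, if_neg hc]]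
        rw [hh]
    have e2 : (univ.filter fun i : Fin 3 => G₂.r (Sum.inr i) = Sum.inr i) = {0} := by
      ext i
      fin_cases i <;> (rw [Finset.mem_filter]; simp [G₂, move2])
    rw [e1, e2, Finset.sum_singleton]
  rw [hsum]
  have hzero : 3 * G₂.w (Sum.inr 0) + (G₂.val (Sum.inr 0) - 3) = 0 := by
    rw [G.move2_val_inr0 v f₁ f₂ hv hf₁ hf₂ hfl₁ hfl₂ hne]
    rfl
  rw [hzero, add_zero]
  apply Finset.sum_lt_sum
  · intro x hx
    rw [G.move2_val_inl v f₁ f₂ hv hf₁ hf₂ hfl₁ hfl₂ hne x]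
    have hw2 : G₂.w (Sum.inl x) = G.w x := rfl
    rw [hw2]
    by_cases h : x = v
    · subst h
      rw [if_pos rfl, if_pos rfl]
      omega
    · rw [if_neg h, if_neg h]
      omega
  · refine ⟨v, by rw [vertexFinset, Finset.mem_filter]; exact ⟨Finset.mem_univ _, hv⟩, ?_⟩
    rw [G.move2_val_inl v f₁ f₂ hv hf₁ hf₂ hfl₁ hfl₂ hne v]
    have hw2 : G₂.w (Sum.inl v) = G.w v := rfl
    rw [hw2, if_pos rfl, if_pos rfl]
    omega

end move2lemmas

end WGraph
open Finset in
theorem WGraph.exists_maximal {μ : Type} (N : ℕ) :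
    ∀ G : WGraph μ, G.measure ≤ N → G.Connected → G.Stable →
    ∃ (G' : WGraph μ) (_ : GMor G' G), G'.Stable ∧
      (∀ v, G'.IsVertex v → G'.w v = 0 ∧ G'.val v = 3) := by
  induction N using Nat.strong_induction_on with
  | _ N ih =>
    intro G hm hconn hstab
    by_cases h1 : ∃ v, G.r v = v ∧ 1 ≤ G.w v
    · obtain ⟨v, hv, hw⟩ := h1
      have hφ := G.move1GMor v hv hw
      have hlt := G.move1_measure v hv hw
      obtain ⟨G', ψ, hst', hmax⟩ := ih (G.move1 v hv).measure (by omega) (G.move1 v hv)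
        le_rfl (hφ.connected_of hconn) (G.move1_stable v hv hw hstab)
      exact ⟨G', ψ.comp hφ, hst', hmax⟩
    · by_cases h2 : ∃ v, G.r v = v ∧ 4 ≤ G.val v
      · obtain ⟨v, hv, hval4⟩ := h2
        have hw0 : G.w v = 0 := by
          by_contra hC
          exact h1 ⟨v, hv, by omega⟩
        have hcard : 1 < (univ.filter (fun x => G.r x ≠ x ∧ G.r x = v)).card := by
          unfold WGraph.val at hval4
          omega
        obtain ⟨f₁, hf₁m, f₂, hf₂m, hne⟩ := Finset.one_lt_card.1 hcard
        rw [Finset.mem_filter] at hf₁m hf₂m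
        have hφ := G.move2GMor v f₁ f₂ hv hf₁m.2.2 hf₂m.2.2 hf₁m.2.1 hf₂m.2.1 hw0
        have hlt := G.move2_measure v f₁ f₂ hv hf₁m.2.2 hf₂m.2.2 hf₁m.2.1 hf₂m.2.1 hne
          hw0 hval4
        obtain ⟨G', ψ, hst', hmax⟩ := ih
          (G.move2 v f₁ f₂ hv hf₁m.2.2 hf₂m.2.2 hf₁m.2.1 hf₂m.2.1).measure (by omega)
          (G.move2 v f₁ f₂ hv hf₁m.2.2 hf₂m.2.2 hf₁m.2.1 hf₂m.2.1) le_rfl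
          (hφ.connected_of hconn)
          (G.move2_stable v f₁ f₂ hv hf₁m.2.2 hf₂m.2.2 hf₁m.2.1 hf₂m.2.1 hne hw0
            hval4 hstab)
        exact ⟨G', ψ.comp hφ, hst', hmax⟩
      · refine ⟨G, GMor.id' G, hstab, ?_⟩
        intro v hv
        have hw0 : G.w v = 0 := by
          by_contra hC
          exact h1 ⟨v, hv, by omega⟩
        have hval3 : G.val v ≤ 3 := by
          by_contra hC
          exact h2 ⟨v, hv, by omega⟩
        have hst := hstab v hv
        rw [hw0] at hst
        push_cast at hst
        exact ⟨hw0, by omega⟩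
/-- Every stable connected weighted `n`-marked graph of genus `g`
is a weighted edge contraction of a maximal one: there is a stable connected
weighted `n`-marked graph `G'` of the same genus, all of whose vertices have weight
`0` and valence `3`, a subset `S ⊆ E(G')` and a morphism `G' → G` contracting
exactly `S` (i.e. `(G')/S ≅ G`). -/
theorem stable_graph_is_contraction_of_maximal {n : ℕ} (G : WGraph (Fin n))
    (hconn : G.Connected) (hstab : G.Stable) :
    ∃ G' : WGraph (Fin n), G'.Connected ∧ G'.Stable ∧ G'.genus = G.genus ∧
      (∀ v, G'.IsVertex v → G'.w v = 0 ∧ G'.val v = 3) ∧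
      ∃ (S : Finset (Finset G'.X)) (φ : GMor G' G),
        S ⊆ G'.edgeSet ∧ φ.contractedSet = S := by
  obtain ⟨G', φ, hst, hmax⟩ := WGraph.exists_maximal G.measure G le_rfl hconn hstab
  exact ⟨G', φ.connected_of hconn, hst, φ.genus_eq, hmax, φ.contractedSet, φ,
    φ.contractedSet_subset_edgeSet, rfl⟩
end

section
/- If (G, h, m) is a stable connected weighted n-marked graph of genus g, then #V(G) ≤ 2g − 2 + n and #E(G) ≤ 3g − 3 + n. -/
/-- Flags moved by the involution are counted twice by the edges. -/
lemma WGraph.card_moved {μ : Type} (G : WGraph μ) :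
    (Finset.univ.filter (fun x : G.X => G.ι x ≠ x)).card = 2 * G.numE := by
  classical
  set s := Finset.univ.filter (fun x : G.X => G.ι x ≠ x) with hs
  have hmem : ∀ x ∈ s, ({x, G.ι x} : Finset G.X) ∈ G.edgeSet := by
    intro x hx
    simp only [WGraph.edgeSet, WGraph.subEdgeSet, Finset.mem_image]
    exact ⟨x, hx, rfl⟩
  have h := Finset.card_eq_sum_card_fiberwise hmem
  have hfib : ∀ b ∈ G.edgeSet,
      (s.filter (fun x => ({x, G.ι x} : Finset G.X) = b)).card = 2 := by
    intro b hb
    simp only [WGraph.edgeSet, WGraph.subEdgeSet, Finset.mem_image,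
      Finset.mem_filter, Finset.mem_univ, true_and] at hb
    obtain ⟨a, ha, rfl⟩ := hb
    have hset : s.filter (fun x => ({x, G.ι x} : Finset G.X) = {a, G.ι a})
        = {a, G.ι a} := by
      ext x
      simp only [Finset.mem_filter, hs, Finset.mem_univ, true_and,
        Finset.mem_insert, Finset.mem_singleton]
      constructor
      · rintro ⟨-, hpair⟩
        have : x ∈ ({a, G.ι a} : Finset G.X) := by
          rw [← hpair]; simp
        simpa using this
      · rintro (rfl | rfl)
        · exact ⟨ha, rfl⟩
        · refine ⟨?_, ?_⟩
          · rw [G.ι_invol]; exact fun h => ha h.symm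
          · rw [G.ι_invol, Finset.pair_comm]
    rw [hset, Finset.card_insert_of_notMem (by simpa using fun h => ha h.symm),
      Finset.card_singleton]
  rw [h, Finset.sum_congr rfl hfib, Finset.sum_const, smul_eq_mul, mul_comm]
  rfl

/-- The legs are in bijection with the markings. -/
lemma WGraph.card_legs {n : ℕ} (G : WGraph (Fin n)) :
    (Finset.univ.filter (fun x : G.X => G.r x ≠ x ∧ G.ι x = x)).card = n := by
  classical
  have := Finset.card_bij (s := (Finset.univ : Finset (Fin n)))
    (t := Finset.univ.filter (fun x : G.X => G.r x ≠ x ∧ G.ι x = x))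
    (fun j _ => G.mark j)
    (fun j _ => by
      simp only [Finset.mem_filter, Finset.mem_univ, true_and]
      exact ⟨G.mark_flag j, G.mark_leg j⟩)
    (fun j _ k _ h => G.mark_inj h)
    (fun x hx => by
      simp only [Finset.mem_filter, Finset.mem_univ, true_and] at hx
      obtain ⟨j, hj⟩ := G.mark_surj x hx.1 hx.2
      exact ⟨j, Finset.mem_univ j, hj⟩)
  simpa using this.symm

/-- A stable connected weighted `n`-marked graph of genus `g` has
at most `2g - 2 + n` vertices and at most `3g - 3 + n` edges. -/
theorem stable_graph_bounds {n : ℕ} (G : WGraph (Fin n))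
    (hconn : G.Connected) (hstab : G.Stable) :
    (G.numV : ℤ) ≤ 2 * G.genus - 2 + (n : ℤ) ∧
      (G.numE : ℤ) ≤ 3 * G.genus - 3 + (n : ℤ) := by
  classical
  set V := G.vertexFinset with hV
  -- total number of flags
  have hflags : (Finset.univ.filter (fun x : G.X => G.r x ≠ x)).card
      = 2 * G.numE + n := by
    have hsplit :
        ((Finset.univ.filter (fun x : G.X => G.r x ≠ x)).filter
            (fun x => G.ι x = x)).card
          + ((Finset.univ.filter (fun x : G.X => G.r x ≠ x)).filter
            (fun x => ¬ G.ι x = x)).card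
          = (Finset.univ.filter (fun x : G.X => G.r x ≠ x)).card :=
      Finset.card_filter_add_card_filter_not _
    have h1 : (Finset.univ.filter (fun x : G.X => G.r x ≠ x)).filter
        (fun x => G.ι x = x)
        = Finset.univ.filter (fun x : G.X => G.r x ≠ x ∧ G.ι x = x) := by
      rw [Finset.filter_filter]
    have h2 : (Finset.univ.filter (fun x : G.X => G.r x ≠ x)).filter
        (fun x => ¬ G.ι x = x)
        = Finset.univ.filter (fun x : G.X => G.ι x ≠ x) := by
      rw [Finset.filter_filter]
      apply Finset.filter_congr
      intro x _
      constructor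
      · exact fun h => h.2
      · exact fun h => ⟨fun hr => h (G.ι_fix x hr), h⟩
    rw [h1, h2, G.card_legs, G.card_moved] at hsplit
    omega
  -- sum of valences equals number of flags
  have hval : ∑ v ∈ V, (G.val v : ℤ)
      = ((Finset.univ.filter (fun x : G.X => G.r x ≠ x)).card : ℤ) := by
    have hmem : ∀ x ∈ Finset.univ.filter (fun x : G.X => G.r x ≠ x), G.r x ∈ V := by
      intro x _
      simp only [hV, WGraph.vertexFinset, Finset.mem_filter, Finset.mem_univ, true_and]
      exact G.r_idem x
    have h := Finset.card_eq_sum_card_fiberwise hmem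
    have h2 : ∀ v ∈ V, ((Finset.univ.filter (fun x : G.X => G.r x ≠ x)).filter
        (fun x => G.r x = v)).card = G.val v := by
      intro v _
      rw [WGraph.val, Finset.filter_filter]
    rw [h]
    push_cast
    exact (Finset.sum_congr rfl fun v hv => by rw [h2 v hv]).symm
  -- stability gives a lower bound on the sum
  have hstabsum : (V.card : ℤ) ≤ ∑ v ∈ V, (2 * (G.w v : ℤ) - 2 + (G.val v : ℤ)) := by
    calc (V.card : ℤ) = ∑ _v ∈ V, (1 : ℤ) := by simp
    _ ≤ _ := by
      apply Finset.sum_le_sum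
      intro v hv
      have hvx : G.IsVertex v := by
        simpa [hV, WGraph.vertexFinset, WGraph.IsVertex] using hv
      exact hstab v hvx
  have hsum : (V.card : ℤ) ≤ 2 * ∑ v ∈ V, (G.w v : ℤ) - 2 * V.card
      + (2 * G.numE + n : ℤ) := by
    have := hstabsum
    rw [Finset.sum_add_distrib, Finset.sum_sub_distrib, ← Finset.mul_sum,
      Finset.sum_const, hval, hflags] at this
    simp only [nsmul_eq_mul] at this
    push_cast at this ⊢
    linarith
  -- genus formula
  have hgen : G.genus = (G.numE : ℤ) - (V.card : ℤ) + 1 + ∑ v ∈ V, (G.w v : ℤ) := by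
    rfl
  have hw : 0 ≤ ∑ v ∈ V, (G.w v : ℤ) :=
    Finset.sum_nonneg fun v _ => by positivity
  have hVb : (V.card : ℤ) ≤ 2 * G.genus - 2 + (n : ℤ) := by linarith
  have hnumV : G.numV = V.card := rfl
  constructor
  · rw [hnumV]; exact hVb
  · linarith
end

section
/- For fixed integers g, n ≥ 0 with 2g − 2 + n > 0, there are only finitely many isomorphism classes of stable connected weighted n-marked graphs of genus g. -/
namespace WGraph
variable {n : ℕ} (G : WGraph (Fin n))

lemma leg_card : (Finset.univ.filter (fun x => G.r x ≠ x ∧ G.ι x = x)).card = n := by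
  have h1 : Finset.univ.filter (fun x => G.r x ≠ x ∧ G.ι x = x)
      = Finset.univ.image G.mark := by
    ext x
    simp only [Finset.mem_filter, Finset.mem_image, Finset.mem_univ, true_and]
    constructor
    · rintro ⟨h1, h2⟩
      simpa using G.mark_surj x h1 h2
    · rintro ⟨j, -, rfl⟩; exact ⟨G.mark_flag j, G.mark_leg j⟩
  rw [h1, Finset.card_image_of_injective _ G.mark_inj, Finset.card_univ, Fintype.card_fin]

lemma pair_eq {x z : G.X} (hz : z ∈ ({x, G.ι x} : Finset G.X)) :
    ({z, G.ι z} : Finset G.X) = {x, G.ι x} := by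
  rcases Finset.mem_insert.mp hz with rfl | hz
  · rfl
  · rw [Finset.mem_singleton.mp hz, G.ι_invol, Finset.pair_comm]

lemma moved_card : (Finset.univ.filter (fun x => G.ι x ≠ x)).card = 2 * G.numE := by
  have hmem : ∀ s ∈ G.edgeSet, ∃ x, G.ι x ≠ x ∧ s = {x, G.ι x} := by
    intro s hs
    simp only [edgeSet, subEdgeSet, Finset.mem_image, Finset.mem_filter,
      Finset.mem_univ, true_and] at hs
    obtain ⟨x, hx, rfl⟩ := hs
    exact ⟨x, hx, rfl⟩
  have hdisj : ∀ s ∈ G.edgeSet, ∀ t ∈ G.edgeSet, s ≠ t → Disjoint s t := by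
    intro s hs t ht hst
    rw [Finset.disjoint_left]
    intro z hzs hzt
    obtain ⟨x, hx, rfl⟩ := hmem s hs
    obtain ⟨y, hy, rfl⟩ := hmem t ht
    exact hst ((G.pair_eq hzs).symm.trans (G.pair_eq hzt))
  have hunion : Finset.univ.filter (fun x => G.ι x ≠ x) = G.edgeSet.biUnion (fun s => s) := by
    ext z
    simp only [Finset.mem_filter, Finset.mem_univ, true_and, Finset.mem_biUnion]
    constructor
    · intro hz
      refine ⟨{z, G.ι z}, ?_, Finset.mem_insert_self _ _⟩
      simp only [edgeSet, subEdgeSet, Finset.mem_image, Finset.mem_filter,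
        Finset.mem_univ, true_and]
      exact ⟨z, hz, rfl⟩
    · rintro ⟨s, hs, hzs⟩
      obtain ⟨x, hx, rfl⟩ := hmem s hs
      rcases Finset.mem_insert.mp hzs with rfl | hzs
      · exact hx
      · rw [Finset.mem_singleton.mp hzs, G.ι_invol]
        exact fun e => hx e.symm
  rw [hunion, Finset.card_biUnion hdisj]
  have h2 : ∀ s ∈ G.edgeSet, s.card = 2 := by
    intro s hs
    obtain ⟨x, hx, rfl⟩ := hmem s hs
    exact Finset.card_pair (fun e => hx e.symm)
  rw [Finset.sum_congr rfl h2, Finset.sum_const, smul_eq_mul, mul_comm]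
  rfl

lemma flag_card :
    (Finset.univ.filter (fun x => G.r x ≠ x)).card = 2 * G.numE + n := by
  have key : Finset.univ.filter (fun x => G.r x ≠ x)
      = (Finset.univ.filter (fun x => G.ι x ≠ x)) ∪
        (Finset.univ.filter (fun x => G.r x ≠ x ∧ G.ι x = x)) := by
    ext x
    simp only [Finset.mem_filter, Finset.mem_union, Finset.mem_univ, true_and]
    constructor
    · intro hx
      by_cases hix : G.ι x = x
      · exact Or.inr ⟨hx, hix⟩
      · exact Or.inl hix
    · rintro (hx | ⟨hx, -⟩)
      · exact fun e => hx (G.ι_fix x e)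
      · exact hx
  rw [key, Finset.card_union_of_disjoint, moved_card, leg_card]
  rw [Finset.disjoint_left]
  intro z hz1 hz2
  simp only [Finset.mem_filter] at hz1 hz2
  exact hz1.2 hz2.2.2

lemma val_sum :
    ∑ v ∈ G.vertexFinset, G.val v = (Finset.univ.filter (fun x => G.r x ≠ x)).card := by
  rw [Finset.card_eq_sum_card_fiberwise (f := G.r) (t := G.vertexFinset)]
  · refine Finset.sum_congr rfl fun v hv => ?_
    rw [val, Finset.filter_filter]
  · intro x hx
    simp [vertexFinset, G.r_idem x]

lemma bounds {g : ℤ} (hs : G.Stable) (hg : G.genus = g) :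
    (Fintype.card G.X : ℤ) ≤ 8*g-8+4*(n:ℤ) ∧
      ∀ v, G.r v = v → (G.w v : ℤ) ≤ 3*g-3+(n:ℤ) := by
  set Sn := ∑ v ∈ G.vertexFinset, G.w v with hSn
  have hX : Fintype.card G.X = G.numV + (2 * G.numE + n) := by
    rw [← flag_card, ← Finset.card_univ,
      ← Finset.card_filter_add_card_filter_not (p := fun x => G.r x = x)]
    rfl
  have hgen : (G.numE : ℤ) - G.numV + 1 + Sn = g := by
    rw [← hg]
    simp only [genus, subGenus, subB1, numE, numV, edgeSet, hSn, vertexFinset]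
    push_cast
    ring
  have hstab : (G.numV : ℤ) ≤ 2*(Sn:ℤ) - 2*G.numV + (2*G.numE + n) := by
    have h1 : (G.numV : ℤ) = ∑ _v ∈ G.vertexFinset, (1:ℤ) := by simp [numV]
    have h2 : ∑ v ∈ G.vertexFinset, (2 * (G.w v : ℤ) - 2 + (G.val v : ℤ))
        = 2*(Sn:ℤ) - 2*G.numV + (2*G.numE + n) := by
      rw [Finset.sum_add_distrib, Finset.sum_sub_distrib, ← Finset.mul_sum,
        Finset.sum_const, ← Nat.cast_sum, ← Nat.cast_sum, val_sum, flag_card]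
      push_cast [hSn, numV]
      ring
    calc (G.numV : ℤ) = ∑ _v ∈ G.vertexFinset, (1:ℤ) := h1
      _ ≤ ∑ v ∈ G.vertexFinset, (2 * (G.w v : ℤ) - 2 + (G.val v : ℤ)) := by
          refine Finset.sum_le_sum fun v hv => ?_
          have := hs v (by simpa [vertexFinset, IsVertex] using hv)
          omega
      _ = _ := h2
  constructor
  · rw [hX]; push_cast; omega
  · intro v hv
    have hle : G.w v ≤ Sn :=
      Finset.single_le_sum (f := fun v => G.w v) (fun i _ => Nat.zero_le _)
        (by simpa [vertexFinset] using hv)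
    have : (G.w v : ℤ) ≤ (Sn : ℤ) := by exact_mod_cast hle
    omega

end WGraph


/-- Auxiliary: finite data encoding a small graph. -/
abbrev GData (n N W : ℕ) : Type :=
  Σ m : Fin (N+1),
    ((Fin m → Fin m) × (Fin m → Fin m) × (Fin m → Fin (W+1)) × (Fin n → Fin m))

/-- The graph axioms stated on a data tuple. -/
def GAx {n N W : ℕ} (d : GData n N W) : Prop :=
  (∀ x, d.2.1 (d.2.1 x) = d.2.1 x) ∧ (∀ x, d.2.2.1 (d.2.2.1 x) = x) ∧
  (∀ x, d.2.1 x = x → d.2.2.1 x = x) ∧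
  (∀ j, d.2.1 (d.2.2.2.2 j) ≠ d.2.2.2.2 j) ∧
  (∀ j, d.2.2.1 (d.2.2.2.2 j) = d.2.2.2.2 j) ∧
  Function.Injective d.2.2.2.2 ∧
  (∀ x, d.2.1 x ≠ x → d.2.2.1 x = x → ∃ j, d.2.2.2.2 j = x)

/-- A default weighted `n`-marked graph. -/
def defaultG (n : ℕ) : WGraph (Fin n) where
  X := Fin n ⊕ Unit
  fin := inferInstance
  deq := inferInstance
  r := fun _ => Sum.inr ()
  ι := id
  r_idem := fun _ => rfl
  ι_invol := fun _ => rfl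
  ι_fix := fun _ _ => rfl
  w := fun _ => 0
  mark := Sum.inl
  mark_flag := fun j => by simp
  mark_leg := fun _ => rfl
  mark_inj := Sum.inl_injective
  mark_surj := fun x hx _ => by
    cases x with
    | inl j => exact ⟨j, rfl⟩
    | inr u => cases u; exact absurd rfl hx

open scoped Classical in
/-- Decode a data tuple into a weighted marked graph (or a default graph if the
axioms fail). -/
noncomputable def mkG {N W : ℕ} (n : ℕ) (d : GData n N W) : WGraph (Fin n) :=
  if h : GAx d then
    { X := Fin d.1
      fin := inferInstance
      deq := inferInstance
      r := d.2.1
      ι := d.2.2.1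
      r_idem := h.1
      ι_invol := h.2.1
      ι_fix := h.2.2.1
      w := fun x => (d.2.2.2.1 x : ℕ)
      mark := d.2.2.2.2
      mark_flag := h.2.2.2.1
      mark_leg := h.2.2.2.2.1
      mark_inj := h.2.2.2.2.2.1
      mark_surj := h.2.2.2.2.2.2 }
  else defaultG n


/-- For fixed `g, n` with `2g - 2 + n > 0` there are only finitely
many isomorphism classes of stable connected weighted `n`-marked graphs of
genus `g`. -/
theorem finitely_many_stable_graphs {g : ℤ} {n : ℕ} (h : 0 < 2 * g - 2 + (n : ℤ)) :
    ∃ (k : ℕ) (R : Fin k → WGraph (Fin n)),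
      ∀ G : WGraph (Fin n), G.Connected → G.Stable → G.genus = g →
        ∃ j, Nonempty (GIso G (R j)) := by
  classical
  set N : ℕ := (8*g-8+4*(n:ℤ)).toNat with hN
  set W : ℕ := (3*g-3+(n:ℤ)).toNat with hW
  refine ⟨Fintype.card (GData n N W),
    fun j => mkG n ((Fintype.equivFin (GData n N W)).symm j), ?_⟩
  intro G _hc hs hg
  obtain ⟨hcard, hweight⟩ := G.bounds hs hg
  have hm : Fintype.card G.X < N + 1 := by omega
  set m : ℕ := Fintype.card G.X with hmdef
  let e : G.X ≃ Fin m := Fintype.equivFin G.X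
  have hwbound : ∀ y : Fin m,
      (if G.r (e.symm y) = e.symm y then G.w (e.symm y) else 0) < W + 1 := by
    intro y
    split
    · next hv =>
      have h1 := hweight _ hv
      omega
    · omega
  let d : GData n N W :=
    ⟨⟨m, hm⟩,
      fun x => e (G.r (e.symm x)),
      fun x => e (G.ι (e.symm x)),
      fun x => ⟨if G.r (e.symm x) = e.symm x then G.w (e.symm x) else 0, hwbound x⟩,
      fun j => e (G.mark j)⟩
  have hax : GAx d := by
    refine ⟨fun x => ?_, fun x => ?_, fun x hx => ?_, fun j => ?_, fun j => ?_,
      ?_, fun x hx hix => ?_⟩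
    · show e (G.r (e.symm (e (G.r (e.symm x))))) = e (G.r (e.symm x))
      rw [Equiv.symm_apply_apply, G.r_idem]
    · show e (G.ι (e.symm (e (G.ι (e.symm x))))) = x
      rw [Equiv.symm_apply_apply, G.ι_invol, Equiv.apply_symm_apply]
    · have hv : G.r (e.symm x) = e.symm x := by
        have h2 := congrArg e.symm (show e (G.r (e.symm x)) = x from hx)
        simpa using h2
      show e (G.ι (e.symm x)) = x
      rw [G.ι_fix _ hv, Equiv.apply_symm_apply]
    · show e (G.r (e.symm (e (G.mark j)))) ≠ e (G.mark j)
      rw [Equiv.symm_apply_apply]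
      exact fun hEq => G.mark_flag j (e.injective hEq)
    · show e (G.ι (e.symm (e (G.mark j)))) = e (G.mark j)
      rw [Equiv.symm_apply_apply, G.mark_leg]
    · intro a b hab
      exact G.mark_inj (e.injective hab)
    · have h1 : G.r (e.symm x) ≠ e.symm x := by
        intro hEq
        apply hx
        show e (G.r (e.symm x)) = x
        rw [hEq, Equiv.apply_symm_apply]
      have h2 : G.ι (e.symm x) = e.symm x := by
        have h3 := congrArg e.symm (show e (G.ι (e.symm x)) = x from hix)
        simpa using h3
      obtain ⟨j, hj⟩ := G.mark_surj _ h1 h2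
      refine ⟨j, ?_⟩
      show e (G.mark j) = x
      rw [hj, Equiv.apply_symm_apply]
  refine ⟨Fintype.equivFin (GData n N W) d, ?_⟩
  simp only [Equiv.symm_apply_apply]
  simp only [mkG, dif_pos hax]
  refine ⟨⟨e, fun x => ?_, fun x => ?_, fun x hx => ?_, fun j => rfl⟩⟩
  · show e (G.r x) = e (G.r (e.symm (e x)))
    rw [Equiv.symm_apply_apply]
  · show e (G.ι x) = e (G.ι (e.symm (e x)))
    rw [Equiv.symm_apply_apply]
  · show (if G.r (e.symm (e x)) = e.symm (e x) then G.w (e.symm (e x)) else 0) = G.w x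
    rw [Equiv.symm_apply_apply, if_pos hx]
end

section
/- Let M be an integral, saturated, sharp commutative monoid. Then for any two finitely generated submonoids N, P ⊆ M there exists a finitely generated saturated submonoid Q ⊆ M containing both N and P; one may take Q = {x ∈ M : x lies in the subgroup of M^{gp} generated by N ∪ P, and n·x ∈ ⟨N ∪ P⟩ for some integer n ≥ 1}, where ⟨N ∪ P⟩ is the submonoid of M generated by N ∪ P. In particular, the finitely generated saturated submonoids of M form a directed family under inclusion whose union is M. -/
section Gro
variable (M : Type) [AddCommMonoid M]

/-- Stable Grothendieck congruence on `M × M`. -/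
def groCon : AddCon (M × M) where
  r x y := ∃ e, x.1 + y.2 + e = y.1 + x.2 + e
  iseqv := by
    refine ⟨fun x => ⟨0, rfl⟩, fun ⟨e, he⟩ => ⟨e, he.symm⟩, ?_⟩
    rintro ⟨a, b⟩ ⟨c, d⟩ ⟨p, q⟩ ⟨e, he⟩ ⟨f, hf⟩
    refine ⟨c + d + e + f, ?_⟩
    have : a + q + (c + d + e + f) = (a + d + e) + (c + q + f) := by abel
    rw [this, he, hf]; abel
  add' := by
    rintro ⟨a, b⟩ ⟨c, d⟩ ⟨x, y⟩ ⟨z, w⟩ ⟨e, he⟩ ⟨f, hf⟩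
    refine ⟨e + f, ?_⟩
    show a + x + (d + w) + (e + f) = c + z + (b + y) + (e + f)
    have h1 : a + x + (d + w) + (e + f) = (a + d + e) + (x + w + f) := by abel
    rw [h1, he, hf]; abel

abbrev Gro : Type := (groCon M).Quotient

instance : Neg (Gro M) :=
  ⟨fun g => AddCon.liftOn g (fun x => ((x.2, x.1) : M × M))
    (by rintro ⟨a, b⟩ ⟨c, d⟩ ⟨e, he⟩
        refine ((groCon M).eq).mpr ⟨e, ?_⟩
        show b + c + e = d + a + e
        have h1 : b + c + e = c + b + e := by abel
        have h2 : a + d + e = c + b + e := he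
        have h3 : d + a + e = a + d + e := by abel
        rw [h1, h3, h2])⟩

instance : AddCommGroup (Gro M) :=
  { (inferInstance : AddCommMonoid (Gro M)) with
    neg := Neg.neg
    zsmul := zsmulRec
    neg_add_cancel := by
      intro g
      refine AddCon.induction_on g ?_
      rintro ⟨a, b⟩
      show (↑((b, a) : M × M) : Gro M) + ↑((a, b) : M × M) = ↑((0,0) : M × M)
      rw [← AddCon.coe_add]
      exact ((groCon M).eq).mpr ⟨0, by show b + a + 0 + 0 = 0 + (a + b) + 0; abel⟩ }

/-- canonical map `M → Gro M`. -/
def gi : M →+ Gro M where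
  toFun a := ((a, 0) : M × M)
  map_zero' := rfl
  map_add' a b := by
    rw [← AddCon.coe_add]
    exact ((groCon M).eq).mpr ⟨0, by show a + b + (0 + 0) + 0 = a + b + 0 + 0; abel⟩

lemma gro_coe_eq_sub (a b : M) : (↑((a, b) : M × M) : Gro M) = gi M a - gi M b := by
  rw [eq_sub_iff_add_eq]
  show (↑((a, b) : M × M) : Gro M) + ↑((b, 0) : M × M) = ↑((a, 0) : M × M)
  rw [← AddCon.coe_add, Prod.mk_add_mk]
  refine ((groCon M).eq).mpr ⟨0, ?_⟩
  simp only []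
  abel

end Gro


/-- A submonoid `Q ⊆ M` is saturated if every element `x = a - b` (`a, b ∈ Q`) of
the subgroup of `M^{gp}` generated by `Q` with `k • x ∈ Q` for some `k ≥ 1` lies in
`Q` (equivalently, `Q` is saturated as an abstract monoid). -/
def SatSubmonoid {M : Type} [AddCommMonoid M] (Q : AddSubmonoid M) : Prop :=
  ∀ a b : M, a ∈ Q → b ∈ Q → ∀ k : ℕ, 0 < k →
    (∃ q ∈ Q, k • a = k • b + q) → ∃ x ∈ Q, a = b + x

section Main
variable {M : Type} [AddCommMonoid M]

lemma gi_injective (hint : IntegralMonoid M) : Function.Injective (gi M) := by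
  intro a b h
  obtain ⟨e, he⟩ := ((groCon M).eq).mp h
  refine hint e a b ?_
  calc e + a = a + 0 + e := by abel
    _ = b + 0 + e := he
    _ = e + b := by abel

lemma gro_coe_nsmul (n : ℕ) (x : M × M) :
    (n • (x : Gro M)) = ((n • x : M × M) : Gro M) := by
  induction n with
  | zero => simp
  | succ n ih =>
      rw [succ_nsmul, ih, succ_nsmul, ← AddCon.coe_add]

lemma eq_of_nsmul_eq (hint : IntegralMonoid M) (hsat : SaturatedMonoid M)
    (hsharp : Sharp M) {k : ℕ} (hk : 0 < k) {a b : M} (h : k • a = k • b) : a = b := by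
  obtain ⟨q, hq⟩ := hsat k a b hk ⟨0, by rw [h, add_zero]⟩
  obtain ⟨q', hq'⟩ := hsat k b a hk ⟨0, by rw [h, add_zero]⟩
  have h2 : a + 0 = a + (q' + q) := by
    conv_lhs => rw [add_zero, hq, hq']
    abel
  have h3 : q' + q = 0 := (hint a 0 (q' + q) h2).symm
  have h4 : q' = 0 := hsharp q' q h3
  rw [hq', h4, add_zero]

lemma gro_noZero (hint : IntegralMonoid M) (hsat : SaturatedMonoid M)
    (hsharp : Sharp M) : NoZeroSMulDivisors ℤ (Gro M) := by
  constructor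
  intro z g h
  rcases eq_or_ne z 0 with rfl | hz
  · exact Or.inl rfl
  right
  have hrep : ∃ x : M × M, g = ↑x := AddCon.induction_on g fun x => ⟨x, rfl⟩
  obtain ⟨⟨a, b⟩, rfl⟩ := hrep
  have h2 : (z.natAbs : ℕ) • ((a, b) : Gro M) = 0 := by
    rw [← Nat.cast_smul_eq_nsmul ℤ]
    rcases Int.natAbs_eq z with e | e
    · rw [← e]; exact h
    · rw [← neg_neg ((z.natAbs : ℤ)), ← e, neg_smul, h, neg_zero]
  set n := z.natAbs with hn
  have hnpos : 0 < n := Int.natAbs_pos.mpr hz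
  rw [gro_coe_nsmul] at h2
  have h0 : (0 : Gro M) = ((0, 0) : M × M) := rfl
  rw [h0] at h2
  obtain ⟨e, he⟩ := ((groCon M).eq).mp h2
  have hab : n • a = n • b := by
    refine hint e _ _ ?_
    calc e + n • a = (n • (a, b) : M × M).1 + ((0,0) : M × M).2 + e := by
          show e + n • a = n • a + 0 + e; abel
      _ = ((0,0) : M × M).1 + (n • (a, b) : M × M).2 + e := he
      _ = e + n • b := by show 0 + n • b + e = e + n • b; abel
  have : a = b := eq_of_nsmul_eq hint hsat hsharp hnpos hab
  subst this
  exact ((groCon M).eq).mpr ⟨0, by show a + 0 + 0 = 0 + a + 0; abel⟩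

/-- The saturation of `S` in `M`. -/
def Qsub (S : AddSubmonoid M) : AddSubmonoid M where
  carrier := {x | (∃ a ∈ S, ∃ b ∈ S, x + b = a) ∧ ∃ k : ℕ, 0 < k ∧ k • x ∈ S}
  zero_mem' := ⟨⟨0, S.zero_mem, 0, S.zero_mem, by rw [add_zero]⟩, 1, Nat.one_pos,
    by simpa using S.zero_mem⟩
  add_mem' := by
    rintro x y ⟨⟨a, ha, b, hb, hab⟩, k, hk, hkx⟩ ⟨⟨a', ha', b', hb', hab'⟩, l, hl, hly⟩
    refine ⟨⟨a + a', add_mem ha ha', b + b', add_mem hb hb', ?_⟩,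
      k * l, Nat.mul_pos hk hl, ?_⟩
    · calc x + y + (b + b') = (x + b) + (y + b') := by abel
        _ = a + a' := by rw [hab, hab']
    · rw [smul_add]
      exact add_mem (by rw [mul_comm, mul_smul]; exact nsmul_mem hkx l)
        (by rw [mul_smul]; exact nsmul_mem hly k)

lemma le_Qsub (S : AddSubmonoid M) : S ≤ Qsub S := by
  intro x hx
  exact ⟨⟨x, hx, 0, S.zero_mem, by rw [add_zero]⟩, 1, Nat.one_pos, by simpa using hx⟩

lemma mem_Qsub {S : AddSubmonoid M} {x : M} :
    x ∈ Qsub S ↔ ((∃ a ∈ S, ∃ b ∈ S, x + b = a) ∧ ∃ k : ℕ, 0 < k ∧ k • x ∈ S) :=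
  Iff.rfl

lemma sat_Qsub (hint : IntegralMonoid M) (hsat : SaturatedMonoid M)
    (S : AddSubmonoid M) : SatSubmonoid (Qsub S) := by
  rintro a b ha hb k hk ⟨q, hqQ, hkab⟩
  obtain ⟨x, hx⟩ := hsat k a b hk ⟨q, hkab⟩
  have hkx : k • x = q := by
    refine hint (k • b) _ _ ?_
    rw [← smul_add, ← hx, hkab]
  obtain ⟨⟨aa, haa, ba, hba, e1⟩, _⟩ := ha
  obtain ⟨⟨ab, hab, bb, hbb, e2⟩, _⟩ := hb
  obtain ⟨_, m, hm, hmq⟩ := hqQ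
  refine ⟨x, ⟨⟨aa + bb, add_mem haa hbb, ab + ba, add_mem hab hba, ?_⟩,
    m * k, Nat.mul_pos hm hk, ?_⟩, hx⟩
  · calc x + (ab + ba) = b + x + (bb + ba) := by rw [← e2]; abel
      _ = a + (bb + ba) := by rw [← hx]
      _ = aa + bb := by rw [← e1]; abel
  · rw [mul_smul, hkx]
    exact hmq

end Main

section FG
variable {M : Type} [AddCommMonoid M]

lemma Qsub_fg (hint : IntegralMonoid M) (hsat : SaturatedMonoid M)
    (hsharp : Sharp M) (S : AddSubmonoid M) (hS : S.FG) : (Qsub S).FG := by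
  classical
  obtain ⟨T, hT⟩ := hS
  -- every element of S is a `ℕ`-combination of elements of `T`
  have hrep : ∀ a ∈ S, ∃ c : T → ℕ, ∑ i : T, c i • (i : M) = a := by
    intro a ha
    have : S ≤ { carrier := {a | ∃ c : T → ℕ, ∑ i : T, c i • (i : M) = a},
                 zero_mem' := ⟨0, by simp⟩,
                 add_mem' := by
                   rintro x y ⟨c, hc⟩ ⟨d, hd⟩
                   refine ⟨c + d, ?_⟩
                   simp only [Pi.add_apply, add_nsmul]
                   rw [Finset.sum_add_distrib, hc, hd] } := by
      rw [← hT]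
      refine AddSubmonoid.closure_le.mpr ?_
      rintro x hx
      refine ⟨fun i => if i = ⟨x, hx⟩ then 1 else 0, ?_⟩
      simp [ite_smul]
    exact this ha
  have hsS : ∀ i : T, (i : M) ∈ S := fun i => hT ▸ AddSubmonoid.subset_closure i.2
  letI : NoZeroSMulDivisors ℤ (Gro M) := gro_noZero hint hsat hsharp
  set L : Submodule ℤ (Gro M) :=
    Submodule.span ℤ (Set.range fun i : T => gi M (i : M)) with hL
  haveI : Module.Finite ℤ L :=
    Module.Finite.span_of_finite ℤ (Set.finite_range _)
  haveI : Module.Free ℤ L := Module.free_of_finite_type_torsion_free'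
  have hmemL : ∀ i : T, gi M (i : M) ∈ L := by
    intro i; rw [hL]; exact Submodule.subset_span ⟨i, rfl⟩
  have hSL : ∀ a ∈ S, gi M a ∈ L := by
    intro a ha
    obtain ⟨c, hc⟩ := hrep a ha
    rw [← hc, map_sum]
    refine sum_mem fun i _ => ?_
    rw [map_nsmul]
    exact nsmul_mem (hmemL i) (c i)
  have hQL : ∀ x ∈ Qsub S, gi M x ∈ L := by
    rintro x ⟨⟨a, ha, b, hb, hab⟩, -⟩
    have : gi M x = gi M a - gi M b := by
      rw [eq_sub_iff_add_eq, ← map_add, hab]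
    rw [this]
    exact sub_mem (hSL a ha) (hSL b hb)
  set bas := Module.Free.chooseBasis ℤ L with hbas
  set c : T → L := fun i =>
    ⟨gi M (i : M), hmemL i⟩ with hc
  set B : Module.Free.ChooseBasisIndex ℤ ↥L → ℤ :=
    fun j => ∑ i : T, |bas.repr (c i) j| with hB
  set F : Set M := {x | x ∈ Qsub S ∧ ∃ k : ℕ, 0 < k ∧ ∃ r : T → ℕ,
    (∀ i, r i ≤ k) ∧ k • x = ∑ i : T, r i • (i : M)} with hF
  -- coordinate bound for elements of F
  have hbound : ∀ x ∈ F, ∀ (hx : gi M x ∈ L) j, |bas.repr ⟨gi M x, hx⟩ j| ≤ B j := by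
    rintro x ⟨hxQ, k, hk, r, hr, hks⟩ hx j
    have eL : ((k : ℤ) • (⟨gi M x, hx⟩ : L)) = ∑ i : T, (r i : ℤ) • c i := by
      apply Subtype.ext
      push_cast [Submodule.coe_smul, AddSubmonoidClass.coe_finset_sum]
      rw [Nat.cast_smul_eq_nsmul, ← map_nsmul, hks, map_sum]
      refine Finset.sum_congr rfl fun i _ => ?_
      rw [Nat.cast_smul_eq_nsmul, ← map_nsmul]
    have e1 : (k : ℤ) * bas.repr ⟨gi M x, hx⟩ j = ∑ i : T, (r i : ℤ) * bas.repr (c i) j := by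
      calc (k : ℤ) * bas.repr ⟨gi M x, hx⟩ j
          = ((k : ℤ) • bas.repr ⟨gi M x, hx⟩) j := by
            rw [Finsupp.smul_apply, smul_eq_mul]
        _ = bas.repr ((k : ℤ) • (⟨gi M x, hx⟩ : L)) j := by rw [map_smul]
        _ = bas.repr (∑ i : T, (r i : ℤ) • c i) j := by rw [eL]
        _ = ∑ i : T, (r i : ℤ) * bas.repr (c i) j := by
            rw [map_sum, Finsupp.finset_sum_apply]
            exact Finset.sum_congr rfl fun i _ => by
              rw [map_smul, Finsupp.smul_apply, smul_eq_mul]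
    have e2 : |(k : ℤ)| * |bas.repr ⟨gi M x, hx⟩ j| ≤ (k : ℤ) * B j := by
      rw [← abs_mul, e1]
      calc |∑ i : T, (r i : ℤ) * bas.repr (c i) j|
          ≤ ∑ i : T, |(r i : ℤ) * bas.repr (c i) j| := Finset.abs_sum_le_sum_abs _ _
        _ ≤ ∑ i : T, (k : ℤ) * |bas.repr (c i) j| := by
            refine Finset.sum_le_sum fun i _ => ?_
            rw [abs_mul, Nat.abs_cast]
            exact mul_le_mul_of_nonneg_right (by exact_mod_cast hr i) (abs_nonneg _)
        _ = (k : ℤ) * B j := by rw [hB, Finset.mul_sum]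
    have hkz : (0 : ℤ) < (k : ℤ) := by exact_mod_cast hk
    rw [abs_of_pos hkz] at e2
    exact le_of_mul_le_mul_left e2 hkz
  -- F is finite
  have hFfin : F.Finite := by
    set φ : M → (Module.Free.ChooseBasisIndex ℤ ↥L → ℤ) := fun x =>
      if h : gi M x ∈ L then (fun j => bas.repr ⟨gi M x, h⟩ j) else 0 with hφ
    have himg : φ '' F ⊆ Set.pi Set.univ (fun j => Set.Icc (-B j) (B j)) := by
      rintro - ⟨x, hxF, rfl⟩ j -
      have hx := hQL x hxF.1
      rw [hφ]
      simp only [dif_pos hx]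
      exact abs_le.mp (hbound x hxF hx j)
    have hinj : Set.InjOn φ F := by
      intro x hx x' hx' h
      have h1 := hQL x hx.1
      have h2 := hQL x' hx'.1
      rw [hφ] at h
      simp only [dif_pos h1, dif_pos h2] at h
      have : bas.repr ⟨gi M x, h1⟩ = bas.repr ⟨gi M x', h2⟩ :=
        Finsupp.ext fun j => congrFun h j
      have : (⟨gi M x, h1⟩ : L) = ⟨gi M x', h2⟩ := bas.repr.injective this
      exact gi_injective hint (Subtype.ext_iff.mp this)
    exact Set.Finite.of_finite_image
      ((Set.Finite.pi fun j => Set.finite_Icc _ _).subset himg) hinj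
  -- generation
  have hgen : Qsub S = AddSubmonoid.closure ((↑T : Set M) ∪ F) := by
    apply le_antisymm
    · rintro x ⟨⟨a, ha, b, hb, hab⟩, k, hk, hkx⟩
      obtain ⟨cf, hcf⟩ := hrep (k • x) hkx
      have htS : (∑ i : T, (cf i / k) • (i : M)) ∈ S :=
        sum_mem fun i _ => nsmul_mem (hsS i) _
      have htc : (∑ i : T, (cf i / k) • (i : M)) ∈
          AddSubmonoid.closure ((↑T : Set M) ∪ F) :=
        sum_mem fun i _ => nsmul_mem
          (AddSubmonoid.subset_closure (Set.mem_union_left _ i.2)) _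
      have hdecomp : k • x = k • (∑ i : T, (cf i / k) • (i : M))
          + ∑ i : T, (cf i % k) • (i : M) := by
        rw [← hcf, Finset.smul_sum, ← Finset.sum_add_distrib]
        refine Finset.sum_congr rfl fun i _ => ?_
        rw [← mul_smul, ← add_nsmul, Nat.div_add_mod]
      obtain ⟨q, hq⟩ := hsat k x (∑ i : T, (cf i / k) • (i : M)) hk ⟨_, hdecomp⟩
      have hkq : k • q = ∑ i : T, (cf i % k) • (i : M) := by
        refine hint (k • (∑ i : T, (cf i / k) • (i : M))) _ _ ?_
        rw [← smul_add, ← hq, hdecomp]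
      have hqQ : q ∈ Qsub S := by
        refine ⟨⟨a, ha, (∑ i : T, (cf i / k) • (i : M)) + b, add_mem htS hb, ?_⟩,
          k, hk, ?_⟩
        · calc q + ((∑ i : T, (cf i / k) • (i : M)) + b)
              = ((∑ i : T, (cf i / k) • (i : M)) + q) + b := by abel
            _ = a := by rw [← hq, hab]
        · rw [hkq]; exact sum_mem fun i _ => nsmul_mem (hsS i) _
      have hqF : q ∈ F :=
        ⟨hqQ, k, hk, fun i => cf i % k, fun i => (Nat.mod_lt _ hk).le, hkq⟩
      rw [hq]
      exact add_mem htc (AddSubmonoid.subset_closure (Set.mem_union_right _ hqF))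
    · refine AddSubmonoid.closure_le.mpr ?_
      rintro x (hx | hx)
      · exact le_Qsub S (hT ▸ AddSubmonoid.subset_closure hx)
      · exact hx.1
  refine ⟨(T.finite_toSet.union hFfin).toFinset, ?_⟩
  rw [Set.Finite.coe_toFinset, hgen]

end FG

/-- Let `M` be an integral, saturated, sharp commutative monoid.
For any two finitely generated submonoids `N, P ⊆ M` there is a finitely generated
saturated submonoid `Q ⊆ M` containing both; one may take
`Q = {x ∈ M | x lies in the subgroup of M^{gp} generated by N ∪ P (i.e.
x + b = a for some a, b ∈ ⟨N ∪ P⟩ = N ⊔ P), and k • x ∈ ⟨N ∪ P⟩ for some k ≥ 1}`.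
In particular the finitely generated saturated submonoids of `M` form a directed
family under inclusion whose union is `M`. -/
theorem fg_saturated_submonoids_directed {M : Type} [AddCommMonoid M]
    (hint : IntegralMonoid M) (hsat : SaturatedMonoid M) (hsharp : Sharp M)
    (N Pm : AddSubmonoid M) (hN : N.FG) (hPm : Pm.FG) :
    (∃ Q : AddSubmonoid M, Q.FG ∧ SatSubmonoid Q ∧ N ≤ Q ∧ Pm ≤ Q ∧
      ∀ x : M, x ∈ Q ↔
        ((∃ a ∈ N ⊔ Pm, ∃ b ∈ N ⊔ Pm, x + b = a) ∧
          ∃ k : ℕ, 0 < k ∧ k • x ∈ N ⊔ Pm)) ∧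
    (∀ Q₁ Q₂ : AddSubmonoid M, Q₁.FG → SatSubmonoid Q₁ → Q₂.FG → SatSubmonoid Q₂ →
      ∃ Q₃ : AddSubmonoid M, Q₃.FG ∧ SatSubmonoid Q₃ ∧ Q₁ ≤ Q₃ ∧ Q₂ ≤ Q₃) ∧
    (∀ x : M, ∃ Q : AddSubmonoid M, Q.FG ∧ SatSubmonoid Q ∧ x ∈ Q) := by
  classical
  have sup_fg : ∀ (A B : AddSubmonoid M), A.FG → B.FG → (A ⊔ B).FG := by
    rintro A B ⟨Ta, hTa⟩ ⟨Tb, hTb⟩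
    exact ⟨Ta ∪ Tb, by rw [Finset.coe_union, AddSubmonoid.closure_union, hTa, hTb]⟩
  have main : ∀ S : AddSubmonoid M, S.FG →
      ∃ Q : AddSubmonoid M, Q.FG ∧ SatSubmonoid Q ∧ S ≤ Q ∧
        ∀ x : M, x ∈ Q ↔
          ((∃ a ∈ S, ∃ b ∈ S, x + b = a) ∧ ∃ k : ℕ, 0 < k ∧ k • x ∈ S) :=
    fun S hS => ⟨Qsub S, Qsub_fg hint hsat hsharp S hS, sat_Qsub hint hsat S,
      le_Qsub S, fun _ => mem_Qsub⟩
  refine ⟨?_, ?_, ?_⟩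
  · obtain ⟨Q, h1, h2, h3, h4⟩ := main (N ⊔ Pm) (sup_fg N Pm hN hPm)
    exact ⟨Q, h1, h2, le_trans le_sup_left h3, le_trans le_sup_right h3, h4⟩
  · intro Q₁ Q₂ h1 _ h2 _
    obtain ⟨Q, hfg, hsatQ, hle, _⟩ := main (Q₁ ⊔ Q₂) (sup_fg _ _ h1 h2)
    exact ⟨Q, hfg, hsatQ, le_trans le_sup_left hle, le_trans le_sup_right hle⟩
  · intro x
    obtain ⟨Q, hfg, hsatQ, hle, _⟩ := main (AddSubmonoid.closure {x}) ⟨{x}, by simp⟩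
    exact ⟨Q, hfg, hsatQ, hle (AddSubmonoid.subset_closure rfl)⟩
end

section
/- Finitely generated submonoids lift along filtered colimits: let I be a filtered category, let {M_i}_{i∈I} be an I-indexed diagram of commutative monoids, and let M be its colimit in the category of commutative monoids, with canonical maps c_i : M_i → M. If P ⊆ M is a finitely generated submonoid, then there exist an index i ∈ I and a finitely generated submonoid N ⊆ M_i such that c_i restricts to an isomorphism of monoids from N onto P. -/
open CategoryTheory CategoryTheory.Limits


lemma exists_finset_span {R M : Type*} [Semiring R] [AddCommMonoid M] [Module R M]
    (S : Set M) (h : (Submodule.span R S).FG) :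
    ∃ T : Finset M, ↑T ⊆ S ∧ Submodule.span R (↑T : Set M) = Submodule.span R S := by
  classical
  obtain ⟨t, ht⟩ := h
  have hmem : ∀ x ∈ t, ∃ u : Finset M, ↑u ⊆ S ∧ x ∈ Submodule.span R (↑u : Set M) := by
    intro x hx
    have : x ∈ Submodule.span R S := ht ▸ Submodule.subset_span hx
    exact Submodule.mem_span_finite_of_mem_span this
  choose! u hu1 hu2 using hmem
  refine ⟨t.biUnion u, ?_, le_antisymm ?_ ?_⟩
  · intro x hx
    simp only [Finset.coe_biUnion, Set.mem_iUnion] at hx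
    obtain ⟨y, hy, hxy⟩ := hx
    exact hu1 y hy hxy
  · refine Submodule.span_le.mpr ?_
    intro x hx
    simp only [Finset.coe_biUnion, Set.mem_iUnion] at hx
    obtain ⟨y, hy, hxy⟩ := hx
    exact Submodule.subset_span (hu1 y hy hxy)
  · rw [← ht]
    refine Submodule.span_le.mpr (fun x hx => ?_)
    exact Submodule.span_mono (by
      intro z hz
      simp only [Finset.coe_biUnion, Set.mem_iUnion]
      exact ⟨x, hx, hz⟩) (hu2 x hx)

/-- The set of "binomial" differences associated to a congruence. -/
def diffSet {n : ℕ} (E : AddCon (Fin n →₀ ℕ)) : Set (AddMonoidAlgebra ℤ (Fin n →₀ ℕ)) :=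
  {p | ∃ a b, E a b ∧ p = AddMonoidAlgebra.single a 1 - AddMonoidAlgebra.single b 1}

lemma key_mem_span {n : ℕ} (E : AddCon (Fin n →₀ ℕ)) {a b : Fin n →₀ ℕ}
    (h : (AddMonoidAlgebra.single a 1 - AddMonoidAlgebra.single b 1 : AddMonoidAlgebra ℤ (Fin n →₀ ℕ))
      ∈ Ideal.span (diffSet E)) : E a b := by
  classical
  let ψ : AddMonoidAlgebra ℤ (Fin n →₀ ℕ) →+* AddMonoidAlgebra ℤ E.Quotient :=
    AddMonoidAlgebra.mapDomainRingHom ℤ (AddCon.mk' E)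
  have hψ : ∀ x : Fin n →₀ ℕ, ψ (AddMonoidAlgebra.single x 1)
      = AddMonoidAlgebra.single (x : E.Quotient) (1 : ℤ) := fun x => AddMonoidAlgebra.mapDomain_single
  have hker : Ideal.span (diffSet E) ≤ RingHom.ker ψ := by
    rw [Ideal.span_le]
    rintro p ⟨x, y, hxy, rfl⟩
    have hx : (x : E.Quotient) = (y : E.Quotient) := E.eq.mpr hxy
    simp only [SetLike.mem_coe, RingHom.mem_ker, map_sub, hψ, hx, sub_self]
  have h0 : ψ (AddMonoidAlgebra.single a 1 - AddMonoidAlgebra.single b 1) = 0 := hker h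
  rw [map_sub, sub_eq_zero, hψ, hψ] at h0
  have : (a : E.Quotient) = (b : E.Quotient) :=
    (AddMonoidAlgebra.single_left_inj (one_ne_zero)).mp h0
  exact E.eq.mp this

/-- **Rédei's theorem**: every additive congruence on `ℕ^n` is finitely generated. -/
theorem addCon_fg (n : ℕ) (E : AddCon (Fin n →₀ ℕ)) :
    ∃ S : Finset ((Fin n →₀ ℕ) × (Fin n →₀ ℕ)),
      (∀ p ∈ S, E p.1 p.2) ∧ addConGen (fun a b => (a, b) ∈ S) = E := by
  classical
  haveI : IsNoetherianRing (AddMonoidAlgebra ℤ (Fin n →₀ ℕ)) :=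
    inferInstanceAs (IsNoetherianRing (MvPolynomial (Fin n) ℤ))
  have hfg : (Ideal.span (diffSet E)).FG := IsNoetherian.noetherian _
  obtain ⟨T, hTD, hspan⟩ := exists_finset_span (diffSet E) hfg
  have hch : ∀ t ∈ T, ∃ q : (Fin n →₀ ℕ) × (Fin n →₀ ℕ),
      E q.1 q.2 ∧ t = AddMonoidAlgebra.single q.1 1 - AddMonoidAlgebra.single q.2 1 := by
    intro t ht
    obtain ⟨x, y, hxy, rfl⟩ := hTD ht
    exact ⟨(x, y), hxy, rfl⟩
  choose! F hF1 hF2 using hch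
  refine ⟨T.image F, ?_, ?_⟩
  · intro p hp
    obtain ⟨t, ht, rfl⟩ := Finset.mem_image.mp hp
    exact hF1 t ht
  · set E' : AddCon (Fin n →₀ ℕ) := addConGen (fun a b => (a, b) ∈ T.image F) with hE'
    refine le_antisymm (AddCon.addConGen_le.mpr ?_) ?_
    · intro x y hxy
      obtain ⟨t, ht, hteq⟩ := Finset.mem_image.mp hxy
      have := hF1 t ht
      rwa [hteq] at this
    · intro a b hab
      have hmem : (AddMonoidAlgebra.single a 1 - AddMonoidAlgebra.single b 1 :
          AddMonoidAlgebra ℤ (Fin n →₀ ℕ)) ∈ Ideal.span (diffSet E) :=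
        Ideal.subset_span ⟨a, b, hab, rfl⟩
      have hmem' : (AddMonoidAlgebra.single a 1 - AddMonoidAlgebra.single b 1 :
          AddMonoidAlgebra ℤ (Fin n →₀ ℕ))
          ∈ Submodule.span (AddMonoidAlgebra ℤ (Fin n →₀ ℕ)) (diffSet E) := hmem
      rw [← hspan] at hmem' 
      have hsub : (↑T : Set (AddMonoidAlgebra ℤ (Fin n →₀ ℕ))) ⊆ diffSet E' := by
        intro t ht
        refine ⟨(F t).1, (F t).2, ?_, hF2 t ht⟩
        exact AddConGen.Rel.of _ _ (Finset.mem_image_of_mem F ht)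
      have : (AddMonoidAlgebra.single a 1 - AddMonoidAlgebra.single b 1 :
          AddMonoidAlgebra ℤ (Fin n →₀ ℕ)) ∈ Ideal.span (diffSet E') :=
        Ideal.span_mono hsub hmem' 
      exact key_mem_span E' this


open CategoryTheory CategoryTheory.Limits

lemma closure_single_top (n : ℕ) :
    AddSubmonoid.closure (Set.range fun k : Fin n => Finsupp.single k (1 : ℕ)) = ⊤ := by
  rw [eq_top_iff]
  intro v _
  induction v using Finsupp.induction with
  | zero => exact zero_mem _
  | single_add a b f _ _ ih =>
    refine add_mem ?_ (ih trivial)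
    have : Finsupp.single a b = b • Finsupp.single a (1 : ℕ) := by
      rw [Finsupp.smul_single, smul_eq_mul, mul_one]
    rw [this]
    exact nsmul_mem (AddSubmonoid.subset_closure (Set.mem_range_self a)) b

lemma mrange_eq_closure {M : Type*} [AddCommMonoid M] {n : ℕ} (f : (Fin n →₀ ℕ) →+ M) :
    AddMonoidHom.mrange f
      = AddSubmonoid.closure (Set.range fun k => f (Finsupp.single k 1)) := by
  rw [AddMonoidHom.mrange_eq_map, ← closure_single_top n, AddMonoidHom.map_mclosure,
    ← Set.range_comp]
  rfl

lemma equalize {I : Type} [SmallCategory I] [IsFiltered I] (K : I ⥤ AddCommMonCat.{0})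
    (c : Cocone K) (hc : IsColimit c) (i0 : I)
    (L : List (↥(K.obj i0) × ↥(K.obj i0)))
    (hL : ∀ pr ∈ L, c.ι.app i0 pr.1 = c.ι.app i0 pr.2) :
    ∃ (i1 : I) (w : i0 ⟶ i1), ∀ pr ∈ L, K.map w pr.1 = K.map w pr.2 := by
  induction L with
  | nil => exact ⟨i0, 𝟙 i0, by simp⟩
  | cons pr L ih =>
    obtain ⟨i1, w, hw⟩ := ih (fun q hq => hL q (List.mem_cons_of_mem _ hq))
    have h1 : c.ι.app i1 (K.map w pr.1) = c.ι.app i1 (K.map w pr.2) := by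
      rw [← comp_apply, ← comp_apply, c.w]
      exact hL pr List.mem_cons_self
    obtain ⟨k, f1, f2, hk⟩ := Concrete.isColimit_exists_of_rep_eq K hc _ _ h1
    refine ⟨IsFiltered.coeq f1 f2, w ≫ f1 ≫ IsFiltered.coeqHom f1 f2, ?_⟩
    intro q hq
    rcases List.mem_cons.mp hq with hq | hq
    · subst hq
      rw [K.map_comp, K.map_comp, comp_apply, comp_apply, comp_apply, comp_apply, hk]
      rw [← comp_apply, ← K.map_comp, ← IsFiltered.coeq_condition, K.map_comp, comp_apply]
    · rw [K.map_comp, comp_apply, comp_apply, K.map_comp, comp_apply, comp_apply, hw q hq]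

/-- Finitely generated submonoids lift along filtered colimits:
if `M = colim M_i` is a filtered colimit of commutative monoids (with canonical
maps `c.ι.app i : M_i → M`) and `P ⊆ M` is a finitely generated submonoid, then
there are an index `i` and a finitely generated submonoid `N ⊆ M_i` such that the
canonical map restricts to an isomorphism of monoids from `N` onto `P` (its image
is `P` and it is injective on `N`). -/
theorem fg_submonoid_lifts_along_filtered_colimit
    {I : Type} [SmallCategory I] [IsFiltered I]
    (K : I ⥤ AddCommMonCat.{0}) (c : Cocone K) (hc : IsColimit c)
    (P : AddSubmonoid c.pt) (hP : P.FG) :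
    ∃ (i : I) (N : AddSubmonoid (K.obj i)), N.FG ∧
      AddSubmonoid.map (show ↥(K.obj i) →+ ↥c.pt from (c.ι.app i).hom) N = P ∧
      Set.InjOn (show ↥(K.obj i) →+ ↥c.pt from (c.ι.app i).hom) (N : Set (K.obj i)) := by
  classical
  obtain ⟨s, hs⟩ := hP
  set n := s.card with hn
  set p : Fin n → ↥c.pt := fun k => ↑(s.equivFin.symm k) with hp
  have hrange : Set.range p = ↑s := by
    ext xx
    constructor
    · rintro ⟨k, rfl⟩; exact (s.equivFin.symm k).2
    · intro hxx; exact ⟨s.equivFin ⟨xx, hxx⟩, by simp [hp]⟩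
  let f : (Fin n →₀ ℕ) →+ ↥c.pt := Finsupp.liftAddHom fun k => multiplesHom _ (p k)
  have hf_single : ∀ (k : Fin n) (m : ℕ), f (Finsupp.single k m) = m • p k :=
    fun k m => Finsupp.liftAddHom_apply_single _ _ _
  -- lift generators to some common stage
  have hlift : ∀ k : Fin n, ∃ (j : I) (xx : ↥(K.obj j)), c.ι.app j xx = p k := by
    intro k
    obtain ⟨j, xx, hxx⟩ := Types.jointly_surjective (K ⋙ forget AddCommMonCat)
      (isColimitOfPreserves (forget AddCommMonCat) hc) (p k)
    exact ⟨j, xx, hxx⟩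
  choose j xg hxg using hlift
  obtain ⟨i0, hi0⟩ := IsFiltered.sup_objs_exists (Finset.image j Finset.univ)
  have hmap : ∀ k, Nonempty (j k ⟶ i0) :=
    fun k => hi0 (Finset.mem_image_of_mem j (Finset.mem_univ k))
  set y : Fin n → ↥(K.obj i0) := fun k => K.map (hmap k).some (xg k) with hy'
  have hy : ∀ k, c.ι.app i0 (y k) = p k := by
    intro k
    rw [hy', ← hxg k, ← comp_apply, c.w]
  let g : (Fin n →₀ ℕ) →+ ↥(K.obj i0) := Finsupp.liftAddHom fun k => multiplesHom _ (y k)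
  have hg_single : ∀ (k : Fin n) (m : ℕ), g (Finsupp.single k m) = m • y k :=
    fun k m => Finsupp.liftAddHom_apply_single _ _ _
  have hfg : (show ↥(K.obj i0) →+ ↥c.pt from (c.ι.app i0).hom).comp g = f := by
    refine Finsupp.addHom_ext fun k m => ?_
    simp only [AddMonoidHom.comp_apply, hg_single, hf_single, map_nsmul]
    exact congrArg (fun z => m • z) (hy k)
  -- finitely generated congruence
  obtain ⟨S, hS1, hS2⟩ := addCon_fg n (AddCon.ker f)
  let L : List (↥(K.obj i0) × ↥(K.obj i0)) := S.toList.map fun q => (g q.1, g q.2)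
  have hLc : ∀ pr ∈ L, c.ι.app i0 pr.1 = c.ι.app i0 pr.2 := by
    intro pr hpr
    obtain ⟨q, hq, rfl⟩ := List.mem_map.mp hpr
    have hfq : f q.1 = f q.2 := hS1 q (Finset.mem_toList.mp hq)
    have h1 := DFunLike.congr_fun hfg q.1
    have h2 := DFunLike.congr_fun hfg q.2
    simp only [AddMonoidHom.comp_apply] at h1 h2
    exact h1.trans (hfq.trans h2.symm)
  obtain ⟨i1, w, hw⟩ := equalize K c hc i0 L hLc
  let wh : ↥(K.obj i0) →+ ↥(K.obj i1) := (K.map w).hom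
  let h : (Fin n →₀ ℕ) →+ ↥(K.obj i1) := wh.comp g
  have hφh : (show ↥(K.obj i1) →+ ↥c.pt from (c.ι.app i1).hom).comp h = f := by
    rw [← hfg]
    refine AddMonoidHom.ext fun v => ?_
    show c.ι.app i1 (K.map w (g v)) = c.ι.app i0 (g v)
    rw [← comp_apply, c.w]
  have hEh : ∀ a b, AddCon.ker f a b → h a = h b := by
    have : AddCon.ker f ≤ AddCon.ker h := by
      rw [← hS2]
      refine AddCon.addConGen_le.mpr fun a b hab => ?_
      show h a = h b
      have : (g a, g b) ∈ L := List.mem_map.mpr ⟨(a, b), Finset.mem_toList.mpr hab, rfl⟩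
      exact hw _ this
    exact fun a b hab => this hab
  refine ⟨i1, AddMonoidHom.mrange h, ?_, ?_, ?_⟩
  · rw [mrange_eq_closure]
    exact (AddSubmonoid.fg_iff _).mpr ⟨_, rfl, Set.finite_range _⟩
  · rw [← AddMonoidHom.mrange_comp, hφh, mrange_eq_closure]
    have : (Set.range fun k => f (Finsupp.single k 1)) = Set.range p := by
      ext xx
      simp only [Set.mem_range]
      constructor
      · rintro ⟨k, rfl⟩; exact ⟨k, by rw [hf_single, one_nsmul]⟩
      · rintro ⟨k, rfl⟩; exact ⟨k, by rw [hf_single, one_nsmul]⟩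
    rw [this, hrange, hs]
  · rintro u ⟨a, rfl⟩ v ⟨b, rfl⟩ huv
    have : f a = f b := by
      have h1 := DFunLike.congr_fun hφh a
      have h2 := DFunLike.congr_fun hφh b
      simp only [AddMonoidHom.comp_apply] at h1 h2
      exact h1.symm.trans (huv.trans h2)
    exact hEh a b this
end
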